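/- arXiv:2506.10354 — 6 statements merged into one kernel-verified Lean document; each statement's English description precedes it below -/
import Mathlib

section
/- Variational characterization of the projection onto an ℓp ball for p ∈ (1, ∞): for every Y ∈ ℝ^d, the Euclidean projection θ̂ = Π_{B_p^d}(Y) satisfies, coordinatewise, θ̂_i = sign(Y_i) · Ψ_{p,λ*}(|Y_i|) for i = 1, …, d, where λ* = inf{ λ ≥ 0 : Σ_{i=1}^d Ψ_{p,λ}(|Y_i|)^p ≤ 1 }. Equivalently, there is λ* ≥ 0 such that for each i, sign(θ̂_i) = sign(Y_i) (with θ̂_i = 0 when Y_i = 0) and |Y_i| = |θ̂_i| + λ*·|θ̂_i|^{p−1}, together with the complementary slackness condition λ*·(‖θ̂‖_p^p − 1) = 0. -/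
open MeasureTheory ProbabilityTheory Real Filter Pointwise
open scoped ENNReal NNReal

noncomputable section

/-- The standard Gaussian measure `N(0, I_d)` on `ℝ^d`. -/
def stdGaussian (d : ℕ) : Measure (Fin d → ℝ) :=
  Measure.pi fun _ => gaussianReal 0 1

/-- Squared Euclidean distance on `ℝ^d`. -/
def sqDist {d : ℕ} (x y : Fin d → ℝ) : ℝ := ∑ i, (x i - y i) ^ 2

/-- The ℓp (quasi)norm, for `0 < p < ∞`. -/
def pNorm {d : ℕ} (p : ℝ) (x : Fin d → ℝ) : ℝ := (∑ i, |x i| ^ p) ^ (1 / p)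

/-- The unit ℓp ball in `ℝ^d`. -/
def lpBall (d : ℕ) (p : ℝ) : Set (Fin d → ℝ) := {x | pNorm p x ≤ 1}

/-- `proj` is a Euclidean projection onto `Θ`: it takes values in `Θ` and
minimizes the Euclidean distance to `Θ`. -/
def IsProjOn {d : ℕ} (Θ : Set (Fin d → ℝ)) (proj : (Fin d → ℝ) → Fin d → ℝ) : Prop :=
  ∀ y, proj y ∈ Θ ∧ ∀ ϑ ∈ Θ, sqDist y (proj y) ≤ sqDist y ϑ

/-- The risk `E‖θhat(θ + σξ) − θ‖₂²` of an estimator at `θ`. -/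
def risk {d : ℕ} (θhat : (Fin d → ℝ) → Fin d → ℝ) (σ : ℝ) (θ : Fin d → ℝ) : ℝ≥0∞ :=
  ∫⁻ ξ, ENNReal.ofReal (sqDist (θhat (θ + σ • ξ)) θ) ∂(stdGaussian d)

/-- Worst-case (supremum) risk of an estimator over `Θ`. -/
def supRisk {d : ℕ} (Θ : Set (Fin d → ℝ)) (θhat : (Fin d → ℝ) → Fin d → ℝ) (σ : ℝ) : ℝ≥0∞ :=
  ⨆ θ ∈ Θ, risk θhat σ θ

/-- Minimax risk over `Θ`: infimum over measurable estimators of the worst-case risk. -/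
def minimax {d : ℕ} (Θ : Set (Fin d → ℝ)) (σ : ℝ) : ℝ≥0∞ :=
  ⨅ θhat ∈ {f : (Fin d → ℝ) → Fin d → ℝ | Measurable f}, supRisk Θ θhat σ


/-!
Write `ψᵢ(λ) = Ψ_{p,λ}(|Yᵢ|)`. From `ψ + λ ψ^(p-1) = t` each `ψᵢ` is nonincreasing and
`|Yᵢ|^(p-1)`-Lipschitz in `λ`, so `g(λ) = ∑ ψᵢ(λ)^p` is continuous on `[0, ∞)`: the infimum `λ*`
of `{λ ≥ 0 | g λ ≤ 1}` is attained and `λ* (g λ* - 1) = 0`. For `θᵢ = sign(Yᵢ) ψᵢ(λ*)` one has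
`Yᵢ - θᵢ = λ* sign(Yᵢ) ψᵢ^(p-1)`, and Young's inequality `ψ^(p-1) |v| - ψ^p ≤ (|v|^p - ψ^p) / p`
together with complementary slackness gives `⟨Y - θ, ϑ - θ⟩ ≤ 0` on the ball. This variational
inequality forces every Euclidean projection of `Y` onto the ball to be `θ`.
-/

/-- `Ψ lam` is the map `Ψ_{p,lam}` of the paper on `[0, ∞)`. -/
def IsProxPow (p : ℝ) (Ψ : ℝ → ℝ → ℝ) : Prop :=
  ∀ lam : ℝ, 0 ≤ lam → ∀ t : ℝ, 0 ≤ t → 0 ≤ Ψ lam t ∧ Ψ lam t + lam * Ψ lam t ^ (p - 1) = t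

section Rpow

variable {p a b : ℝ}

theorem Real.rpow_sub_one_mul_self (ha : 0 ≤ a) (hp : p ≠ 0) : a ^ (p - 1) * a = a ^ p := by
  rw [← Real.rpow_add_one' ha (by simpa using hp), sub_add_cancel]

/-- The tangent-line inequality for the convex function `x ↦ x ^ p / p` at `a`. -/
theorem Real.rpow_sub_one_mul_sub_rpow_le (hp : 1 < p) (ha : 0 ≤ a) (hb : 0 ≤ b) :
    a ^ (p - 1) * b - a ^ p ≤ (b ^ p - a ^ p) / p := by
  have hp0 : p ≠ 0 := by positivity
  have hp1 : p - 1 ≠ 0 := sub_ne_zero.2 hp.ne'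
  have hyoung := Real.young_inequality_of_nonneg (Real.rpow_nonneg ha (p - 1)) hb
    (Real.HolderConjugate.conjExponent hp).symm
  have hpow : (a ^ (p - 1)) ^ Real.conjExponent p = a ^ p := by
    rw [← Real.rpow_mul ha, Real.conjExponent, mul_div_cancel₀ _ hp1]
  rw [hpow, Real.conjExponent, div_div_eq_mul_div] at hyoung
  have hsplit : a ^ p * (p - 1) / p = a ^ p - a ^ p / p := by field_simp
  rw [hsplit] at hyoung
  linarith [sub_div (b ^ p) (a ^ p) p]

end Rpow

namespace IsProxPow

open Set Finset

variable {p : ℝ} {Ψ : ℝ → ℝ → ℝ} {lam lam' t : ℝ}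

theorem nonneg (hΨ : IsProxPow p Ψ) (hlam : 0 ≤ lam) (ht : 0 ≤ t) : 0 ≤ Ψ lam t :=
  (hΨ lam hlam t ht).1

theorem add_mul_rpow (hΨ : IsProxPow p Ψ) (hlam : 0 ≤ lam) (ht : 0 ≤ t) :
    Ψ lam t + lam * Ψ lam t ^ (p - 1) = t :=
  (hΨ lam hlam t ht).2

theorem le_self (hΨ : IsProxPow p Ψ) (hlam : 0 ≤ lam) (ht : 0 ≤ t) : Ψ lam t ≤ t := by
  linarith [hΨ.add_mul_rpow hlam ht,
    mul_nonneg hlam (Real.rpow_nonneg (hΨ.nonneg hlam ht) (p - 1))]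

theorem apply_zero (hΨ : IsProxPow p Ψ) (hlam : 0 ≤ lam) : Ψ lam 0 = 0 :=
  le_antisymm (hΨ.le_self hlam le_rfl) (hΨ.nonneg hlam le_rfl)

theorem pos (hp : p ≠ 1) (hΨ : IsProxPow p Ψ) (hlam : 0 ≤ lam) (ht : 0 < t) : 0 < Ψ lam t := by
  refine (hΨ.nonneg hlam ht.le).lt_of_ne fun h0 => ht.ne ?_
  have h := hΨ.add_mul_rpow hlam ht.le
  rwa [← h0, Real.zero_rpow (sub_ne_zero.2 hp), mul_zero, add_zero] at h

theorem apply_le_of_le (hp : 1 ≤ p) (hΨ : IsProxPow p Ψ) (hlam : 0 ≤ lam) (hle : lam ≤ lam')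
    (ht : 0 ≤ t) : Ψ lam' t ≤ Ψ lam t := by
  by_contra! hlt
  have hpow : Ψ lam t ^ (p - 1) ≤ Ψ lam' t ^ (p - 1) :=
    Real.rpow_le_rpow (hΨ.nonneg hlam ht) hlt.le (sub_nonneg.2 hp)
  have hmul : lam * Ψ lam t ^ (p - 1) ≤ lam' * Ψ lam' t ^ (p - 1) :=
    mul_le_mul hle hpow (Real.rpow_nonneg (hΨ.nonneg hlam ht) _) (hlam.trans hle)
  linarith [hΨ.add_mul_rpow hlam ht, hΨ.add_mul_rpow (hlam.trans hle) ht]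

theorem sub_le_mul (hp : 1 ≤ p) (hΨ : IsProxPow p Ψ) (hlam : 0 ≤ lam) (hle : lam ≤ lam')
    (ht : 0 ≤ t) : Ψ lam t - Ψ lam' t ≤ (lam' - lam) * t ^ (p - 1) := by
  have hlam' : 0 ≤ lam' := hlam.trans hle
  have hpow : Ψ lam' t ^ (p - 1) ≤ Ψ lam t ^ (p - 1) :=
    Real.rpow_le_rpow (hΨ.nonneg hlam' ht) (hΨ.apply_le_of_le hp hlam hle ht) (sub_nonneg.2 hp)
  have hpow_t : Ψ lam t ^ (p - 1) ≤ t ^ (p - 1) :=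
    Real.rpow_le_rpow (hΨ.nonneg hlam ht) (hΨ.le_self hlam ht) (sub_nonneg.2 hp)
  calc Ψ lam t - Ψ lam' t = lam' * Ψ lam' t ^ (p - 1) - lam * Ψ lam t ^ (p - 1) := by
        linarith [hΨ.add_mul_rpow hlam ht, hΨ.add_mul_rpow hlam' ht]
    _ ≤ lam' * Ψ lam t ^ (p - 1) - lam * Ψ lam t ^ (p - 1) := by gcongr
    _ = (lam' - lam) * Ψ lam t ^ (p - 1) := by ring
    _ ≤ (lam' - lam) * t ^ (p - 1) := by gcongr

theorem continuousOn_param (hp : 1 ≤ p) (hΨ : IsProxPow p Ψ) (ht : 0 ≤ t) :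
    ContinuousOn (fun lam => Ψ lam t) (Ici 0) := by
  refine (LipschitzOnWith.of_le_add_mul' (t ^ (p - 1)) fun x hx y hy => ?_).continuousOn
  rcases le_total x y with hxy | hyx
  · rw [Real.dist_eq, abs_sub_comm, abs_of_nonneg (sub_nonneg.2 hxy)]
    linarith [hΨ.sub_le_mul hp hx hxy ht]
  · linarith [hΨ.apply_le_of_le hp hy hyx ht,
      mul_nonneg (Real.rpow_nonneg ht (p - 1)) (dist_nonneg (x := x) (y := y))]

theorem rpow_le_sq_div (hp : p ≠ 0) (hΨ : IsProxPow p Ψ) (hlam : 0 < lam) (ht : 0 ≤ t) :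
    Ψ lam t ^ p ≤ t ^ 2 / lam := by
  have hψ := hΨ.nonneg hlam.le ht
  have hmul : lam * Ψ lam t ^ (p - 1) ≤ t := by linarith [hΨ.add_mul_rpow hlam.le ht]
  rw [le_div_iff₀ hlam, ← Real.rpow_sub_one_mul_self hψ hp]
  calc Ψ lam t ^ (p - 1) * Ψ lam t * lam = lam * Ψ lam t ^ (p - 1) * Ψ lam t := by ring
    _ ≤ t * t := mul_le_mul hmul (hΨ.le_self hlam.le ht) hψ ht
    _ = t ^ 2 := (sq t).symm

theorem abs_sign_mul (hΨ : IsProxPow p Ψ) (hlam : 0 ≤ lam) (y : ℝ) :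
    |Real.sign y * Ψ lam (|y|)| = Ψ lam |y| := by
  rcases lt_trichotomy y 0 with hy | rfl | hy
  · rw [Real.sign_of_neg hy, neg_one_mul, abs_neg, abs_of_nonneg (hΨ.nonneg hlam (abs_nonneg y))]
  · simp [hΨ.apply_zero hlam]
  · rw [Real.sign_of_pos hy, one_mul, abs_of_nonneg (hΨ.nonneg hlam (abs_nonneg y))]

theorem sign_sign_mul (hp : p ≠ 1) (hΨ : IsProxPow p Ψ) (hlam : 0 ≤ lam) (y : ℝ) :
    Real.sign (Real.sign y * Ψ lam |y|) = Real.sign y := by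
  rcases lt_trichotomy y 0 with hy | rfl | hy
  · rw [Real.sign_of_neg hy, neg_one_mul, Real.sign_neg,
      Real.sign_of_pos (hΨ.pos hp hlam (abs_pos.2 hy.ne))]
  · simp [Real.sign_zero]
  · rw [Real.sign_of_pos hy, one_mul, Real.sign_of_pos (hΨ.pos hp hlam (abs_pos.2 hy.ne'))]

variable {ι : Type*} [Fintype ι]

theorem continuousOn_sum_rpow (hp : 1 ≤ p) (hΨ : IsProxPow p Ψ) (y : ι → ℝ) :
    ContinuousOn (fun lam => ∑ j, Ψ lam |y j| ^ p) (Ici 0) :=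
  continuousOn_finsetSum _ fun j _ =>
    (hΨ.continuousOn_param hp (abs_nonneg (y j))).rpow_const fun _ _ => Or.inr (by linarith)

theorem exists_sum_rpow_le_one (hp : p ≠ 0) (hΨ : IsProxPow p Ψ) (y : ι → ℝ) :
    ∃ lam, 0 ≤ lam ∧ ∑ j, Ψ lam |y j| ^ p ≤ 1 := by
  have hsq : 0 ≤ ∑ j, y j ^ 2 := sum_nonneg fun j _ => sq_nonneg (y j)
  have hlam : 0 < 1 + ∑ j, y j ^ 2 := by linarith
  refine ⟨_, hlam.le, ?_⟩
  calc ∑ j, Ψ (1 + ∑ j, y j ^ 2) |y j| ^ p ≤ ∑ j, y j ^ 2 / (1 + ∑ j, y j ^ 2) :=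
        sum_le_sum fun j _ => by
          simpa only [sq_abs] using hΨ.rpow_le_sq_div hp hlam (abs_nonneg (y j))
    _ = (∑ j, y j ^ 2) / (1 + ∑ j, y j ^ 2) := (sum_div _ _ _).symm
    _ ≤ 1 := (div_le_one hlam).2 (by linarith)

end IsProxPow

section Sublevel

open Set Filter Topology

variable {g : ℝ → ℝ} {c : ℝ}

theorem sInf_sublevel_mem (hg : ContinuousOn g (Ici 0)) (hne : ∃ x, 0 ≤ x ∧ g x ≤ c) :
    sInf {x | 0 ≤ x ∧ g x ≤ c} ∈ {x | 0 ≤ x ∧ g x ≤ c} := by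
  have hclosed : IsClosed {x | 0 ≤ x ∧ g x ≤ c} :=
    hg.preimage_isClosed_of_isClosed isClosed_Ici isClosed_Iic
  exact hclosed.csInf_mem hne ⟨0, fun x hx => hx.1⟩

theorem sInf_sublevel_mul_sub_eq_zero (hg : ContinuousOn g (Ici 0))
    (hne : ∃ x, 0 ≤ x ∧ g x ≤ c) :
    sInf {x | 0 ≤ x ∧ g x ≤ c} * (g (sInf {x | 0 ≤ x ∧ g x ≤ c}) - c) = 0 := by
  obtain ⟨hm0, hmc⟩ := sInf_sublevel_mem hg hne
  set m := sInf {x | 0 ≤ x ∧ g x ≤ c}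
  rcases hm0.eq_or_lt with hm | hm
  · rw [← hm, zero_mul]
  refine mul_eq_zero_of_right _ (sub_eq_zero.2 (hmc.eq_of_not_lt fun hlt => ?_))
  have hnear : ∀ᶠ x in 𝓝 m, 0 < x ∧ g x < c :=
    (eventually_gt_nhds hm).and
      ((hg.continuousAt (Ici_mem_nhds hm)).eventually (eventually_lt_nhds hlt))
  obtain ⟨x, ⟨hx0, hxc⟩, hxm⟩ :=
    ((hnear.filter_mono nhdsWithin_le_nhds).and (self_mem_nhdsWithin (s := Iio m))).exists
  exact hxm.not_ge (csInf_le ⟨0, fun x hx => hx.1⟩ ⟨hx0.le, hxc.le⟩)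

end Sublevel

section Projection

open Set Finset

variable {p lam : ℝ}

theorem mul_sub_sign_mul_le (hp : 1 < p) (hlam : 0 ≤ lam) {y ψ : ℝ} (hψ : 0 ≤ ψ)
    (h : ψ + lam * ψ ^ (p - 1) = |y|) (v : ℝ) :
    (y - Real.sign y * ψ) * (v - Real.sign y * ψ) ≤ lam / p * (|v| ^ p - ψ ^ p) := by
  have hp0 : p ≠ 0 := by positivity
  have hcross : 0 ≤ lam * ψ ^ (p - 1) := mul_nonneg hlam (Real.rpow_nonneg hψ _)
  rcases eq_or_ne y 0 with rfl | hy
  · obtain rfl : ψ = 0 := by rw [abs_zero] at h; linarith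
    rw [Real.sign_zero, Real.zero_rpow hp0]
    simp only [sub_zero, zero_mul, mul_zero]
    exact mul_nonneg (div_nonneg hlam (by positivity)) (Real.rpow_nonneg (abs_nonneg v) p)
  set s := Real.sign y
  have hss : s * s = 1 := by
    rcases Real.sign_apply_eq_of_ne_zero y hy with hs | hs <;> simp [s, hs]
  have hsy : s * |y| = y := by
    rcases hy.lt_or_gt with hy | hy
    · simp [s, Real.sign_of_neg hy, abs_of_neg hy]
    · simp [s, Real.sign_of_pos hy, abs_of_pos hy]
  have hsv : s * v ≤ |v| := by
    rcases Real.sign_apply_eq_of_ne_zero y hy with hs | hs <;>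
      simp [s, hs, neg_le_abs, le_abs_self]
  have hpow := Real.rpow_sub_one_mul_self hψ hp0
  calc (y - s * ψ) * (v - s * ψ) = lam * (ψ ^ (p - 1) * (s * v) - ψ ^ p) := by
        linear_combination (s * ψ - v) * hsy + s * (s * ψ - v) * h
          - lam * ψ ^ (p - 1) * ψ * hss - lam * hpow
    _ ≤ lam * (ψ ^ (p - 1) * |v| - ψ ^ p) := by gcongr
    _ ≤ lam * ((|v| ^ p - ψ ^ p) / p) := by
        gcongr; exact Real.rpow_sub_one_mul_sub_rpow_le hp hψ (abs_nonneg v)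
    _ = lam / p * (|v| ^ p - ψ ^ p) := by ring

theorem sum_mul_sub_sign_mul_nonpos {ι : Type*} [Fintype ι] (hp : 1 < p) (hlam : 0 ≤ lam)
    {y ψ v : ι → ℝ} (hψ : ∀ i, 0 ≤ ψ i) (h : ∀ i, ψ i + lam * ψ i ^ (p - 1) = |y i|)
    (hslack : lam * (∑ i, ψ i ^ p - 1) = 0) (hv : ∑ i, |v i| ^ p ≤ 1) :
    ∑ i, (y i - Real.sign (y i) * ψ i) * (v i - Real.sign (y i) * ψ i) ≤ 0 := by
  have hv' : lam / p * (∑ i, |v i| ^ p - 1) ≤ 0 :=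
    mul_nonpos_of_nonneg_of_nonpos (div_nonneg hlam (by positivity)) (by linarith)
  calc ∑ i, (y i - Real.sign (y i) * ψ i) * (v i - Real.sign (y i) * ψ i)
      ≤ ∑ i, lam / p * (|v i| ^ p - ψ i ^ p) :=
        sum_le_sum fun i _ => mul_sub_sign_mul_le hp hlam (hψ i) (h i) (v i)
    _ = lam / p * (∑ i, |v i| ^ p - 1) - lam * (∑ i, ψ i ^ p - 1) / p := by
        rw [← mul_sum, sum_sub_distrib]; ring
    _ ≤ 0 := by rw [hslack, zero_div, sub_zero]; exact hv'

theorem mem_lpBall_iff {d : ℕ} (hp : 0 < p) {x : Fin d → ℝ} :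
    x ∈ lpBall d p ↔ ∑ i, |x i| ^ p ≤ 1 := by
  rw [lpBall, Set.mem_ofPred_eq, pNorm, one_div,
    Real.rpow_inv_le_iff_of_pos (sum_nonneg fun i _ => Real.rpow_nonneg (abs_nonneg _) p)
      zero_le_one hp, Real.one_rpow]

theorem eq_of_sqDist_le_of_sum_mul_nonpos {d : ℕ} {Y θ z : Fin d → ℝ}
    (hz : sqDist Y z ≤ sqDist Y θ) (hθ : ∑ i, (Y i - θ i) * (z i - θ i) ≤ 0) : z = θ := by
  have hexp : sqDist Y z = sqDist Y θ + sqDist z θ - 2 * ∑ i, (Y i - θ i) * (z i - θ i) := by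
    simp only [sqDist, mul_sum, ← sum_add_distrib, ← sum_sub_distrib]
    exact sum_congr rfl fun i _ => by ring
  have hsq : ∑ i, (z i - θ i) ^ 2 = 0 :=
    le_antisymm (by unfold sqDist at hexp hz; linarith) (sum_nonneg fun i _ => sq_nonneg _)
  funext i
  have hi := (sum_eq_zero_iff_of_nonneg fun i _ => sq_nonneg (z i - θ i)).1 hsq i (mem_univ i)
  exact sub_eq_zero.1 (pow_eq_zero_iff two_ne_zero |>.1 hi)

end Projection

/-- Variational characterization of the projection onto the unit ℓp ball,
`p ∈ (1, ∞)`. Let `Ψ lam t` be the unique nonnegative solution `ψ` of `ψ + lam·ψ^(p-1) = t`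
(for `lam ≥ 0`, `t ≥ 0`). Then the projection `θ̂ = Π_{B_p^d}(Y)` satisfies
`θ̂ᵢ = sign(Yᵢ)·Ψ(λ*, |Yᵢ|)` where `λ* = inf{λ ≥ 0 : Σᵢ Ψ(λ, |Yᵢ|)^p ≤ 1}`; equivalently,
there is `λ* ≥ 0` with `sign(θ̂ᵢ) = sign(Yᵢ)` (so `θ̂ᵢ = 0` when `Yᵢ = 0`),
`|Yᵢ| = |θ̂ᵢ| + λ*·|θ̂ᵢ|^(p-1)` for all `i`, and `λ*·(‖θ̂‖_p^p − 1) = 0`. -/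
theorem projection_lp_ball_variational (d : ℕ) (p : ℝ) (hp : 1 < p)
    (Ψ : ℝ → ℝ → ℝ)
    (hΨ : ∀ lam : ℝ, 0 ≤ lam → ∀ t : ℝ, 0 ≤ t →
      0 ≤ Ψ lam t ∧ Ψ lam t + lam * Ψ lam t ^ (p - 1) = t)
    (Y : Fin d → ℝ)
    (proj : (Fin d → ℝ) → Fin d → ℝ) (hproj : IsProjOn (lpBall d p) proj) :
    (∀ i, proj Y i =
        Real.sign (Y i) *
          Ψ (sInf {lam : ℝ | 0 ≤ lam ∧ ∑ j, Ψ lam |Y j| ^ p ≤ 1}) |Y i|) ∧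
    ∃ lam : ℝ, 0 ≤ lam ∧
      (∀ i, Real.sign (proj Y i) = Real.sign (Y i) ∧ (Y i = 0 → proj Y i = 0) ∧
        |Y i| = |proj Y i| + lam * |proj Y i| ^ (p - 1)) ∧
      lam * ((∑ i, |proj Y i| ^ p) - 1) = 0 := by
  have hΨ : IsProxPow p Ψ := hΨ
  have hcont := hΨ.continuousOn_sum_rpow hp.le Y
  have hne := hΨ.exists_sum_rpow_le_one (by positivity) Y
  obtain ⟨hlam, hle⟩ := sInf_sublevel_mem hcont hne
  have hslack := sInf_sublevel_mul_sub_eq_zero hcont hne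
  set lam := sInf {lam : ℝ | 0 ≤ lam ∧ ∑ j, Ψ lam |Y j| ^ p ≤ 1}
  set θ : Fin d → ℝ := fun i => Real.sign (Y i) * Ψ lam |Y i|
  have habs (i : Fin d) : |θ i| = Ψ lam |Y i| := hΨ.abs_sign_mul hlam (Y i)
  have hproj_eq : proj Y = θ := by
    obtain ⟨hmem, hmin⟩ := hproj Y
    refine eq_of_sqDist_le_of_sum_mul_nonpos (hmin θ ?_) <|
      sum_mul_sub_sign_mul_nonpos hp hlam (fun i => hΨ.nonneg hlam (abs_nonneg (Y i)))
        (fun i => hΨ.add_mul_rpow hlam (abs_nonneg (Y i))) hslack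
        ((mem_lpBall_iff (by positivity)).1 hmem)
    simpa only [mem_lpBall_iff (by positivity : (0 : ℝ) < p), habs] using hle
  simp only [hproj_eq, habs]
  refine ⟨fun i => rfl, lam, hlam, fun i => ⟨hΨ.sign_sign_mul hp.ne' hlam (Y i), ?_,
    (hΨ.add_mul_rpow hlam (abs_nonneg (Y i))).symm⟩, hslack⟩
  intro hY
  simp [θ, hY]
end
end

section
/- Risk bound for the MLE under hard sparsity: for every d ≥ 1, every s ∈ {1, …, d}, and every σ > 0, the worst-case risk of the projection onto the set of s-sparse vectors satisfies R^MLE(B_0^d(s), σ) ≤ 48 · σ² · s · log(e·d/s). -/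
/-! The projection `ŵ` of `y = θ + σξ` onto the `s`-sparse vectors is at least as close to `y`
as `θ` is, which is the basic inequality `‖ŵ - θ‖² ≤ 2σ⟪ξ, ŵ - θ⟫`. Since `ŵ - θ` is
`2s`-sparse, Cauchy–Schwarz on its support `S` gives `‖ŵ - θ‖² ≤ 4σ² ∑_{i ∈ S} ξᵢ²`, and
`ξᵢ² ≤ t + 4 e^{(ξᵢ² - t)/4}` bounds this by `4σ² (2st + 4 e^{-t/4} ∑ᵢ e^{ξᵢ²/4})`. As
`E e^{ξ²/4} = √2`, the choice `t = 4 log (d/s)` turns the second term into `16√2 σ² s`. -/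

open MeasureTheory ProbabilityTheory Real Filter Pointwise
open scoped ENNReal NNReal

noncomputable section

open Classical in
/-- The set `B_0^d(s)` of `s`-sparse vectors in `ℝ^d`. -/
def sparseSet (d s : ℕ) : Set (Fin d → ℝ) :=
  {x | (Finset.univ.filter fun i => x i ≠ 0).card ≤ s}


open Finset

lemma le_add_four_mul_exp_sub_div_four (x t : ℝ) : x ≤ t + 4 * exp ((x - t) / 4) := by
  linarith [add_one_le_exp ((x - t) / 4)]

lemma sum_le_card_mul_add_sum_exp {ι : Type*} [Fintype ι] {S : Finset ι} {k : ℕ}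
    (hS : #S ≤ k) (x : ι → ℝ) {t : ℝ} (ht : 0 ≤ t) :
    ∑ i ∈ S, x i ≤ k * t + 4 * exp (-t / 4) * ∑ i, exp (x i / 4) := by
  calc ∑ i ∈ S, x i ≤ ∑ i ∈ S, (t + 4 * exp (-t / 4) * exp (x i / 4)) := by
        gcongr with i
        rw [mul_assoc, ← exp_add, neg_div, neg_add_eq_sub, ← sub_div]
        exact le_add_four_mul_exp_sub_div_four _ _
    _ = #S * t + 4 * exp (-t / 4) * ∑ i ∈ S, exp (x i / 4) := by
        rw [sum_add_distrib, sum_const, nsmul_eq_mul, mul_sum]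
    _ ≤ k * t + 4 * exp (-t / 4) * ∑ i, exp (x i / 4) := by
        have hS' : (#S : ℝ) ≤ k := by exact_mod_cast hS
        have hsub : ∑ i ∈ S, exp (x i / 4) ≤ ∑ i, exp (x i / 4) :=
          sum_le_univ_sum_of_nonneg fun i => (exp_pos _).le
        gcongr

lemma sum_sq_le_four_mul_sum_sq_of_le_two_mul_sum_mul {ι : Type*} (S : Finset ι) (v z : ι → ℝ)
    (h : ∑ i ∈ S, v i ^ 2 ≤ 2 * ∑ i ∈ S, z i * v i) :
    ∑ i ∈ S, v i ^ 2 ≤ 4 * ∑ i ∈ S, z i ^ 2 := by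
  have hcs := sum_mul_sq_le_sq_mul_sq S z v
  have hv : 0 ≤ ∑ i ∈ S, v i ^ 2 := sum_nonneg fun i _ => sq_nonneg _
  rcases hv.eq_or_lt with hv0 | hv0
  · rw [← hv0]
    exact mul_nonneg zero_le_four (sum_nonneg fun i _ => sq_nonneg _)
  · refine le_of_mul_le_mul_right ?_ hv0
    nlinarith [pow_le_pow_left₀ hv h 2]

lemma sub_mem_sparseSet {d s r : ℕ} {x y : Fin d → ℝ} (hx : x ∈ sparseSet d s)
    (hy : y ∈ sparseSet d r) : x - y ∈ sparseSet d (s + r) := by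
  simp only [sparseSet, Set.mem_ofPred_eq] at *
  refine (card_le_card fun i => ?_).trans ((card_union_le _ _).trans (add_le_add hx hy))
  simp only [mem_filter, mem_univ, true_and, mem_union, Pi.sub_apply]
  contrapose!
  rintro ⟨hxi, hyi⟩
  rw [hxi, hyi, sub_zero]

lemma IsProjOn.sqDist_le {d : ℕ} {Θ : Set (Fin d → ℝ)} {proj : (Fin d → ℝ) → Fin d → ℝ}
    (hproj : IsProjOn Θ proj) {θ : Fin d → ℝ} (hθ : θ ∈ Θ) (z : Fin d → ℝ) :
    sqDist (proj (θ + z)) θ ≤ 2 * ∑ i, z i * (proj (θ + z) i - θ i) := by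
  have hmin := (hproj (θ + z)).2 θ hθ
  have hexpand : sqDist (θ + z) (proj (θ + z)) - sqDist (θ + z) θ
      = sqDist (proj (θ + z)) θ - 2 * ∑ i, z i * (proj (θ + z) i - θ i) := by
    simp only [sqDist, ← sum_sub_distrib, mul_sum, Pi.add_apply]
    exact sum_congr rfl fun i _ => by ring
  linarith

instance isProbabilityMeasure_stdGaussian (d : ℕ) : IsProbabilityMeasure (stdGaussian d) := by
  unfold _root_.stdGaussian
  infer_instance

lemma lintegral_sum_comp_eval_stdGaussian {d : ℕ} {g : ℝ → ℝ≥0∞} (hg : Measurable g) :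
    ∫⁻ ξ, ∑ i, g (ξ i) ∂stdGaussian d = d * ∫⁻ x, g x ∂gaussianReal 0 1 := by
  rw [lintegral_finsetSum' (f := fun (i : Fin d) (ξ : Fin d → ℝ) => g (ξ i)) _
    fun i _ => (hg.comp (measurable_pi_apply i)).aemeasurable]
  simp_rw [_root_.stdGaussian,
    (measurePreserving_eval (fun _ => gaussianReal 0 1) _).lintegral_comp hg]
  simp

lemma lintegral_exp_mul_sq_gaussianReal {a : ℝ} (ha : a < 1 / 2) :
    ∫⁻ x, ENNReal.ofReal (exp (a * x ^ 2)) ∂gaussianReal 0 1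
      = ENNReal.ofReal (√(1 - 2 * a))⁻¹ := by
  have hb : 0 < 1 / 2 - a := by linarith
  have hdens : ∀ x, gaussianPDF 0 1 x * ENNReal.ofReal (exp (a * x ^ 2))
      = ENNReal.ofReal ((√(2 * π))⁻¹ * exp (-(1 / 2 - a) * x ^ 2)) := fun x => by
    rw [gaussianPDF, ← ENNReal.ofReal_mul (gaussianPDFReal_nonneg 0 1 x), gaussianPDFReal_def]
    simp only [NNReal.coe_one, mul_one, sub_zero]
    rw [mul_assoc, ← exp_add]
    congr 3
    ring
  rw [gaussianReal_of_var_ne_zero 0 one_ne_zero,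
    lintegral_withDensity_eq_lintegral_mul _ (measurable_gaussianPDF 0 1) (by fun_prop)]
  simp_rw [Pi.mul_apply, hdens]
  rw [← ofReal_integral_eq_lintegral_ofReal ((integrable_exp_neg_mul_sq hb).const_mul _)
      (.of_forall fun x => by positivity), integral_const_mul, integral_gaussian,
    show π / (1 / 2 - a) = 2 * π / (1 - 2 * a) by field_simp,
    sqrt_div' _ (by linarith : 0 ≤ 1 - 2 * a)]
  have : 0 < √(2 * π) := by positivity
  field_simp

lemma sqDist_proj_sparseSet_le {d s : ℕ} {proj : (Fin d → ℝ) → Fin d → ℝ}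
    (hproj : IsProjOn (sparseSet d s) proj) {θ : Fin d → ℝ} (hθ : θ ∈ sparseSet d s)
    (σ : ℝ) (ξ : Fin d → ℝ) {t : ℝ} (ht : 0 ≤ t) :
    sqDist (proj (θ + σ • ξ)) θ
      ≤ 4 * σ ^ 2 * (2 * s * t + 4 * exp (-t / 4) * ∑ i, exp (ξ i ^ 2 / 4)) := by
  set v := proj (θ + σ • ξ) - θ
  have hsparse : v ∈ sparseSet d (s + s) := sub_mem_sparseSet (hproj _).1 hθ
  simp only [sparseSet, Set.mem_ofPred_eq] at hsparse
  set S := univ.filter fun i => v i ≠ 0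
  have hrestrict (f : Fin d → ℝ) (hf : ∀ i, v i = 0 → f i = 0) : ∑ i ∈ S, f i = ∑ i, f i :=
    sum_filter_of_ne fun i _ h => mt (hf i) h
  have hsq : sqDist (proj (θ + σ • ξ)) θ = ∑ i ∈ S, v i ^ 2 :=
    (hrestrict _ fun i (h : proj (θ + σ • ξ) i - θ i = 0) => by rw [h, sq, mul_zero]).symm
  have hinner : ∑ i, (σ • ξ) i * (proj (θ + σ • ξ) i - θ i) = ∑ i ∈ S, (σ • ξ) i * v i :=
    (hrestrict _ fun i (h : proj (θ + σ • ξ) i - θ i = 0) => by rw [h, mul_zero]).symm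
  have hbasic := hproj.sqDist_le hθ (σ • ξ)
  rw [hsq, hinner] at hbasic
  have htail := sum_le_card_mul_add_sum_exp hsparse (fun i => ξ i ^ 2) ht
  push_cast at htail
  calc sqDist (proj (θ + σ • ξ)) θ = ∑ i ∈ S, v i ^ 2 := hsq
    _ ≤ 4 * ∑ i ∈ S, (σ • ξ) i ^ 2 :=
      sum_sq_le_four_mul_sum_sq_of_le_two_mul_sum_mul S v (σ • ξ) hbasic
    _ = 4 * σ ^ 2 * ∑ i ∈ S, ξ i ^ 2 := by
      simp only [Pi.smul_apply, smul_eq_mul, mul_pow, ← mul_sum, mul_assoc]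
    _ ≤ 4 * σ ^ 2 * (2 * s * t + 4 * exp (-t / 4) * ∑ i, exp (ξ i ^ 2 / 4)) := by
      gcongr
      linarith

lemma lintegral_exp_sq_div_four_gaussianReal :
    ∫⁻ x, ENNReal.ofReal (exp (x ^ 2 / 4)) ∂gaussianReal 0 1 = ENNReal.ofReal √2 := by
  have h := lintegral_exp_mul_sq_gaussianReal (a := 1 / 4) (by norm_num)
  rw [show 1 - 2 * (1 / 4 : ℝ) = (√2)⁻¹ ^ 2 by rw [inv_pow, sq_sqrt zero_le_two]; norm_num,
    sqrt_sq (by positivity), inv_inv] at h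
  simpa only [one_div, inv_mul_eq_div] using h

lemma risk_proj_sparseSet_le {d s : ℕ} {proj : (Fin d → ℝ) → Fin d → ℝ}
    (hproj : IsProjOn (sparseSet d s) proj) {θ : Fin d → ℝ} (hθ : θ ∈ sparseSet d s)
    (σ : ℝ) {t : ℝ} (ht : 0 ≤ t) :
    risk proj σ θ ≤ ENNReal.ofReal (4 * σ ^ 2 * (2 * s * t + 4 * exp (-t / 4) * d * √2)) := by
  set A := 4 * σ ^ 2 * (2 * s * t)
  set B := 4 * σ ^ 2 * (4 * exp (-t / 4))
  have hA : 0 ≤ A := by positivity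
  have hB : 0 ≤ B := by positivity
  calc risk proj σ θ
      ≤ ∫⁻ ξ, ENNReal.ofReal A
          + ENNReal.ofReal B * ∑ i, ENNReal.ofReal (exp (ξ i ^ 2 / 4)) ∂stdGaussian d := by
        refine lintegral_mono fun ξ => ?_
        rw [← ENNReal.ofReal_sum_of_nonneg fun i _ => (exp_pos _).le, ← ENNReal.ofReal_mul hB,
          ← ENNReal.ofReal_add hA (by positivity)]
        exact ENNReal.ofReal_le_ofReal
          ((sqDist_proj_sparseSet_le hproj hθ σ ξ ht).trans_eq (by ring))
    _ = ENNReal.ofReal A + ENNReal.ofReal B * (d * ENNReal.ofReal √2) := by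
        rw [lintegral_add_left measurable_const, lintegral_const, measure_univ, mul_one,
          lintegral_const_mul _ (by fun_prop),
          lintegral_sum_comp_eval_stdGaussian (g := fun x => ENNReal.ofReal (exp (x ^ 2 / 4)))
            (by fun_prop),
          lintegral_exp_sq_div_four_gaussianReal]
    _ = ENNReal.ofReal (4 * σ ^ 2 * (2 * s * t + 4 * exp (-t / 4) * d * √2)) := by
        rw [← ENNReal.ofReal_natCast, ← ENNReal.ofReal_mul (Nat.cast_nonneg d),
          ← ENNReal.ofReal_mul hB, ← ENNReal.ofReal_add hA (by positivity)]
        congr 1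
        ring

theorem mle_risk_bound_hard_sparse_general (d : ℕ) (s : ℕ) (hs1 : 1 ≤ s) (hs2 : s ≤ d)
    (σ : ℝ)
    (proj : (Fin d → ℝ) → Fin d → ℝ) (hproj : IsProjOn (sparseSet d s) proj) :
    supRisk (sparseSet d s) proj σ ≤
      ENNReal.ofReal (48 * σ ^ 2 * s * Real.log (Real.exp 1 * d / s)) := by
  have hs : (0 : ℝ) < s := by exact_mod_cast hs1
  have hsd : (s : ℝ) ≤ d := by exact_mod_cast hs2
  have hd : (0 : ℝ) < d := hs.trans_le hsd
  have hds : 0 < (d : ℝ) / s := div_pos hd hs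
  set L := log (d / s)
  have hL : 0 ≤ L := log_nonneg ((one_le_div hs).2 hsd)
  have hexp : exp (-(4 * L) / 4) = s / d := by
    rw [neg_div, mul_div_cancel_left₀ L four_ne_zero, exp_neg, exp_log hds, inv_div]
  have hlog : log (exp 1 * d / s) = 1 + L := by
    rw [mul_div_assoc, log_mul (exp_ne_zero 1) hds.ne', log_exp]
  refine iSup₂_le fun θ hθ =>
    (risk_proj_sparseSet_le hproj hθ σ (t := 4 * L) (by positivity)).trans
      (ENNReal.ofReal_le_ofReal ?_)
  have htail : 4 * ((s : ℝ) / d) * d * √2 = 4 * s * √2 := by field_simp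
  rw [hexp, htail, hlog]
  have hsqrt : √2 ≤ 2 := sqrt_le_iff.2 ⟨zero_le_two, by norm_num⟩
  nlinarith [mul_nonneg (mul_nonneg (sq_nonneg σ) hs.le) hL,
    mul_le_mul_of_nonneg_left hsqrt (mul_nonneg (sq_nonneg σ) hs.le)]

/-- Risk bound for the MLE under hard sparsity: for every `d ≥ 1`,
`s ∈ {1,…,d}` and `σ > 0`, `R^MLE(B_0^d(s), σ) ≤ 48·σ²·s·log(e·d/s)`. -/
theorem mle_risk_bound_hard_sparse (d : ℕ) (hd : 1 ≤ d) (s : ℕ) (hs1 : 1 ≤ s) (hs2 : s ≤ d)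
    (σ : ℝ) (hσ : 0 < σ)
    (proj : (Fin d → ℝ) → Fin d → ℝ) (hproj : IsProjOn (sparseSet d s) proj)
    (hmeas : Measurable proj) :
    supRisk (sparseSet d s) proj σ ≤
      ENNReal.ofReal (48 * σ ^ 2 * s * Real.log (Real.exp 1 * d / s)) :=
  mle_risk_bound_hard_sparse_general d s hs1 hs2 σ proj hproj
end
end

section
/- Risk bound for the MLE under weak sparsity: for every p ∈ (0, 1), every d ≥ 1, and every σ > 0, the worst-case risk of the projection onto the unit ℓp ball satisfies R^MLE(B_p^d, σ) ≤ 540 · r(σ, p, d), where r(σ, p, d) = 1 if σ ≥ 1/√(1 + log d); r(σ, p, d) = (σ² log(e·d·σ^p))^{1−p/2} if d^{−1/p} ≤ σ ≤ 1/√(1 + log d); and r(σ, p, d) = σ²d if σ ≤ d^{−1/p}. -/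
/-!
Write `h = Π(θ + σξ) - θ`. Comparing the projection with the competitor `θ` gives
`‖h‖₂² ≤ 2σ⟨ξ, h⟩`, and `‖h‖_p^p ≤ 2` because both points lie in `B_p^d`. Splitting
`|ξᵢ| ≤ l + (|ξᵢ| - l)₊` bounds `⟨ξ, h⟩` by `l‖h‖₁ + ‖(|ξ| - l)₊‖₂ ‖h‖₂`. If the first term
dominates, Hölder interpolation `‖h‖₁ ≤ ‖h‖_p^{p/(2-p)} ‖h‖₂^{2(1-p)/(2-p)}` gives
`‖h‖₂² ≲ (σl)^{2-p}`; otherwise `‖h‖₂² ≲ σ² ‖(|ξ| - l)₊‖₂²`, whose expectation is `≲ σ² d e^{-l²/2}`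
by a Chernoff bound. Taking `l² = 2 log(e d σ^p)` in the intermediate regime and `l = 0` in the
low-noise regime gives the bound; in the high-noise regime `‖h‖₂² ≤ 4` trivially.
-/

open MeasureTheory ProbabilityTheory Real Filter Pointwise
open scoped ENNReal NNReal

noncomputable section

lemma abs_sub_rpow_le_add {p : ℝ} (hp0 : 0 ≤ p) (hp1 : p ≤ 1) (x y : ℝ) :
    |x - y| ^ p ≤ |x| ^ p + |y| ^ p :=
  (Real.rpow_le_rpow (abs_nonneg _) (abs_sub _ _) hp0).trans
    (Real.rpow_add_le_add_rpow (abs_nonneg _) (abs_nonneg _) hp0 hp1)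

lemma sum_abs_rpow_le_one_of_mem_lpBall {d : ℕ} {p : ℝ} (hp : 0 < p) {x : Fin d → ℝ}
    (hx : x ∈ lpBall d p) : ∑ i, |x i| ^ p ≤ 1 := by
  have hS : 0 ≤ ∑ i, |x i| ^ p := by positivity
  have hx' : (∑ i, |x i| ^ p) ^ p⁻¹ ≤ 1 := by simpa [lpBall, pNorm] using hx
  simpa [← Real.rpow_mul hS, inv_mul_cancel₀ hp.ne'] using
    Real.rpow_le_one (by positivity) hx' hp.le

lemma sum_sq_le_one_of_mem_lpBall {d : ℕ} {p : ℝ} (hp0 : 0 < p) (hp2 : p ≤ 2)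
    {x : Fin d → ℝ} (hx : x ∈ lpBall d p) : ∑ i, x i ^ 2 ≤ 1 := by
  have hS := sum_abs_rpow_le_one_of_mem_lpBall hp0 hx
  have hle : ∀ i, |x i| ^ p ≤ 1 := fun i =>
    (Finset.single_le_sum (fun j _ => by positivity) (Finset.mem_univ i)).trans hS
  refine le_trans (Finset.sum_le_sum fun i _ => ?_) hS
  have hxi : |x i| ≤ 1 := by
    by_contra! h
    exact (hle i).not_gt (Real.one_lt_rpow h hp0)
  rw [← sq_abs, ← Real.rpow_natCast]
  exact Real.rpow_le_rpow_of_exponent_ge' (abs_nonneg _) hxi hp0.le (by norm_num [hp2])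

lemma sum_abs_le_sum_abs_rpow_mul_sum_sq {ι : Type*} (s : Finset ι) {p : ℝ} (hp1 : p < 1)
    (h : ι → ℝ) :
    ∑ i ∈ s, |h i| ≤
      (∑ i ∈ s, |h i| ^ p) ^ (2 - p)⁻¹ * (∑ i ∈ s, h i ^ 2) ^ ((1 - p) / (2 - p)) := by
  have h2p : (0 : ℝ) < 2 - p := by linarith
  have h1p : (0 : ℝ) < 1 - p := by linarith
  have hconj : (2 - p).HolderConjugate ((2 - p) / (1 - p)) := by
    rw [Real.holderConjugate_iff]
    refine ⟨by linarith, ?_⟩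
    field_simp
    ring
  -- `|h| = |h|^{p/(2-p)} |h|^{2(1-p)/(2-p)}`, then Hölder with exponents `2-p` and `(2-p)/(1-p)`
  have key := Real.inner_le_Lp_mul_Lq_of_nonneg s hconj
    (f := fun i => |h i| ^ (p / (2 - p))) (g := fun i => |h i| ^ (2 * (1 - p) / (2 - p)))
    (fun i _ => by positivity) (fun i _ => by positivity)
  have hsplit : ∀ i, |h i| ^ (p / (2 - p)) * |h i| ^ (2 * (1 - p) / (2 - p)) = |h i| := by
    have hexp : p / (2 - p) + 2 * (1 - p) / (2 - p) = 1 := by field_simp; ring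
    intro i
    rw [← Real.rpow_add' (abs_nonneg _) (by rw [hexp]; norm_num), hexp, Real.rpow_one]
  have hf : ∀ i, (|h i| ^ (p / (2 - p))) ^ (2 - p) = |h i| ^ p := by
    intro i
    rw [← Real.rpow_mul (abs_nonneg _), div_mul_cancel₀ _ h2p.ne']
  have hg : ∀ i, (|h i| ^ (2 * (1 - p) / (2 - p))) ^ ((2 - p) / (1 - p)) = h i ^ 2 := by
    intro i
    rw [← Real.rpow_mul (abs_nonneg _), show 2 * (1 - p) / (2 - p) * ((2 - p) / (1 - p)) = 2 by
      field_simp, Real.rpow_two, sq_abs]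
  simpa only [hsplit, hf, hg, one_div, inv_div] using key

lemma le_rpow_of_le_mul_rpow {S K q : ℝ} (hS : 0 ≤ S) (hK : 0 ≤ K) (hq : 0 < q)
    (h : S ≤ K * S ^ (1 - q⁻¹)) : S ≤ K ^ q := by
  rcases hS.eq_or_lt with rfl | hS
  · positivity
  have hroot : S ^ q⁻¹ ≤ K := by
    have hpos : 0 < S ^ (1 - q⁻¹) := Real.rpow_pos_of_pos hS _
    refine le_of_mul_le_mul_right ?_ hpos
    rwa [← Real.rpow_add hS, add_sub_cancel, Real.rpow_one]
  calc S = (S ^ q⁻¹) ^ q := by rw [← Real.rpow_mul hS.le, inv_mul_cancel₀ hq.ne', Real.rpow_one]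
    _ ≤ K ^ q := Real.rpow_le_rpow (by positivity) hroot hq.le

lemma IsProjOn.sqDist_le_two_mul_inner {d : ℕ} {Θ : Set (Fin d → ℝ)}
    {proj : (Fin d → ℝ) → Fin d → ℝ} (hproj : IsProjOn Θ proj) {θ : Fin d → ℝ} (hθ : θ ∈ Θ)
    (σ : ℝ) (ξ : Fin d → ℝ) :
    sqDist (proj (θ + σ • ξ)) θ ≤ 2 * σ * ∑ i, ξ i * (proj (θ + σ • ξ) i - θ i) := by
  have hmin := (hproj (θ + σ • ξ)).2 θ hθ
  simp only [sqDist, Pi.add_apply, Pi.smul_apply, smul_eq_mul] at hmin ⊢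
  rw [Finset.mul_sum]
  rw [← sub_nonneg, ← Finset.sum_sub_distrib] at hmin ⊢
  convert hmin using 2 with i
  ring

lemma sum_mul_le_mul_sum_abs_add_sum_posPart_mul {ι : Type*} (s : Finset ι) (l : ℝ)
    (ξ h : ι → ℝ) :
    ∑ i ∈ s, ξ i * h i ≤ l * ∑ i ∈ s, |h i| + ∑ i ∈ s, max (|ξ i| - l) 0 * |h i| := by
  rw [Finset.mul_sum, ← Finset.sum_add_distrib]
  refine Finset.sum_le_sum fun i _ => ?_
  calc ξ i * h i ≤ |ξ i| * |h i| := by rw [← abs_mul]; exact le_abs_self _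
    _ ≤ (l + max (|ξ i| - l) 0) * |h i| := by gcongr; linarith [le_max_left (|ξ i| - l) 0]
    _ = _ := by ring

lemma sum_sq_le_of_sum_sq_le_inner {ι : Type*} (s : Finset ι) {p σ l : ℝ} (hp1 : p < 1)
    (hσ : 0 ≤ σ) (hl : 0 ≤ l) {ξ h : ι → ℝ}
    (hmass : ∑ i ∈ s, |h i| ^ p ≤ 2) (hbasic : ∑ i ∈ s, h i ^ 2 ≤ 2 * σ * ∑ i ∈ s, ξ i * h i) :
    ∑ i ∈ s, h i ^ 2 ≤
      2 * (4 * σ * l) ^ (2 - p) + 16 * σ ^ 2 * ∑ i ∈ s, max (|ξ i| - l) 0 ^ 2 := by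
  set S := ∑ i ∈ s, h i ^ 2
  set M := ∑ i ∈ s, max (|ξ i| - l) 0 ^ 2
  set A := ∑ i ∈ s, |h i|
  set B := ∑ i ∈ s, max (|ξ i| - l) 0 * |h i|
  have hS : 0 ≤ S := by positivity
  have hM : 0 ≤ M := by positivity
  have hB : 0 ≤ B := Finset.sum_nonneg fun i _ => by positivity
  have hsplit : S ≤ 2 * σ * (l * A) + 2 * σ * B := by
    nlinarith [sum_mul_le_mul_sum_abs_add_sum_posPart_mul s l ξ h]
  rcases le_total (σ * (l * A)) (σ * B) with hB_dominates | hA_dominates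
  · have hCS : B ^ 2 ≤ M * S := by
      simpa only [sq_abs] using Finset.sum_mul_sq_le_sq_mul_sq s (fun i => max (|ξ i| - l) 0)
        (fun i => |h i|)
    have : S ≤ 16 * σ ^ 2 * M := by
      rcases hS.eq_or_lt with h0 | h0
      · rw [← h0]; positivity
      nlinarith [mul_le_mul_of_nonneg_left hCS (sq_nonneg (4 * σ))]
    linarith [mul_nonneg (mul_nonneg (by norm_num : (0:ℝ) ≤ 2) hσ) hl,
      Real.rpow_nonneg (by positivity : 0 ≤ 4 * σ * l) (2 - p)]
  · have h2p : 0 < 2 - p := by linarith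
    have hA : A ≤ 2 ^ (2 - p)⁻¹ * S ^ (1 - (2 - p)⁻¹) := by
      have hexp : (1 - p) / (2 - p) = 1 - (2 - p)⁻¹ := by field_simp; ring
      refine (sum_abs_le_sum_abs_rpow_mul_sum_sq s hp1 h).trans ?_
      rw [hexp]
      gcongr
    have hK : S ≤ (4 * σ * l * 2 ^ (2 - p)⁻¹) * S ^ (1 - (2 - p)⁻¹) := by
      calc S ≤ 4 * σ * l * A := by linarith
        _ ≤ 4 * σ * l * (2 ^ (2 - p)⁻¹ * S ^ (1 - (2 - p)⁻¹)) := by gcongr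
        _ = _ := by ring
    have := le_rpow_of_le_mul_rpow hS (by positivity) h2p hK
    rw [Real.mul_rpow (by positivity) (by positivity), ← Real.rpow_mul (by norm_num),
      inv_mul_cancel₀ h2p.ne', Real.rpow_one] at this
    nlinarith [mul_nonneg (by norm_num : (0:ℝ) ≤ 16) (mul_nonneg (sq_nonneg σ) hM)]

lemma lintegral_exp_mul_gaussianReal (μ : ℝ) (v : ℝ≥0) (t : ℝ) :
    ∫⁻ x, ENNReal.ofReal (exp (t * x)) ∂gaussianReal μ v =
      ENNReal.ofReal (exp (μ * t + v * t ^ 2 / 2)) := by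
  rw [← ofReal_integral_eq_lintegral_ofReal (integrable_exp_mul_gaussianReal t)
    (ae_of_all _ fun _ => (exp_pos _).le)]
  simpa [mgf] using congrArg ENNReal.ofReal (congrFun (mgf_id_gaussianReal (μ := μ) (v := v)) t)

-- `(|x| - l)₊² ≤ 2 e^{(l+1)(|x|-l)}`, in the shape that the Gaussian moment generating function
-- at `±(l + 1)` turns into `e^{-l²/2}` decay.
lemma sq_posPart_abs_sub_le {l : ℝ} (hl : 0 ≤ l) (x : ℝ) :
    max (|x| - l) 0 ^ 2 ≤ 2 * exp (-(l ^ 2 + l)) * (exp ((l + 1) * x) + exp (-(l + 1) * x)) := by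
  rcases le_or_gt |x| l with hx | hx
  · rw [max_eq_right (by linarith), sq, zero_mul]
    positivity
  set m := |x| - l
  have hm : 0 ≤ m := by linarith
  have hexp_abs : exp ((l + 1) * |x|) ≤ exp ((l + 1) * x) + exp (-(l + 1) * x) := by
    rcases abs_cases x with ⟨h, _⟩ | ⟨h, _⟩ <;> rw [h]
    · linarith [exp_pos (-(l + 1) * x)]
    · rw [mul_neg, ← neg_mul]; linarith [exp_pos ((l + 1) * x)]
  calc max m 0 ^ 2 = m ^ 2 := by rw [max_eq_left hm]
    _ ≤ 2 * exp m := by nlinarith [quadratic_le_exp_of_nonneg hm]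
    _ ≤ 2 * exp ((l + 1) * m) := by gcongr; nlinarith
    _ = 2 * exp (-(l ^ 2 + l)) * exp ((l + 1) * |x|) := by
        rw [mul_assoc, ← exp_add]; congr 2; ring
    _ ≤ _ := by gcongr

lemma lintegral_sq_posPart_abs_sub_gaussianReal_le {l : ℝ} (hl : 0 ≤ l) :
    ∫⁻ x, ENNReal.ofReal (max (|x| - l) 0 ^ 2) ∂gaussianReal 0 1 ≤
      ENNReal.ofReal (4 * exp ((1 - l ^ 2) / 2)) := by
  have hc : 0 ≤ 2 * exp (-(l ^ 2 + l)) := by positivity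
  calc ∫⁻ x, ENNReal.ofReal (max (|x| - l) 0 ^ 2) ∂gaussianReal 0 1
      ≤ ∫⁻ x, ENNReal.ofReal (2 * exp (-(l ^ 2 + l))) *
          (ENNReal.ofReal (exp ((l + 1) * x)) + ENNReal.ofReal (exp (-(l + 1) * x)))
          ∂gaussianReal 0 1 := by
        refine lintegral_mono fun x => ?_
        rw [← ENNReal.ofReal_add (exp_pos _).le (exp_pos _).le, ← ENNReal.ofReal_mul hc]
        exact ENNReal.ofReal_le_ofReal (sq_posPart_abs_sub_le hl x)
    _ = ENNReal.ofReal (2 * exp (-(l ^ 2 + l))) *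
          (ENNReal.ofReal (exp ((l + 1) ^ 2 / 2)) + ENNReal.ofReal (exp ((l + 1) ^ 2 / 2))) := by
        rw [lintegral_const_mul _ (by fun_prop), lintegral_add_left (by fun_prop),
          lintegral_exp_mul_gaussianReal, lintegral_exp_mul_gaussianReal, neg_sq]
        norm_num
    _ = ENNReal.ofReal (4 * exp ((1 - l ^ 2) / 2)) := by
        rw [← ENNReal.ofReal_add (exp_pos _).le (exp_pos _).le, ← ENNReal.ofReal_mul hc]
        congr 1
        rw [show (1 - l ^ 2) / 2 = -(l ^ 2 + l) + (l + 1) ^ 2 / 2 by ring, exp_add]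
        ring

instance (d : ℕ) : IsProbabilityMeasure (stdGaussian d) := by
  unfold _root_.stdGaussian
  infer_instance

lemma lintegral_sq_posPart_abs_sub_stdGaussian_le {d : ℕ} {l : ℝ} (hl : 0 ≤ l) (i : Fin d) :
    ∫⁻ ξ, ENNReal.ofReal (max (|ξ i| - l) 0 ^ 2) ∂stdGaussian d ≤
      ENNReal.ofReal (4 * exp ((1 - l ^ 2) / 2)) := by
  rw [_root_.stdGaussian,
    (measurePreserving_eval (fun _ : Fin d => gaussianReal 0 1) i).lintegral_comp
      (f := fun x => ENNReal.ofReal (max (|x| - l) 0 ^ 2)) (by fun_prop)]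
  exact lintegral_sq_posPart_abs_sub_gaussianReal_le hl

section ProjLpBall

variable {d : ℕ} {p : ℝ} {proj : (Fin d → ℝ) → Fin d → ℝ} {θ : Fin d → ℝ}

lemma sqDist_proj_lpBall_le {σ l : ℝ} (hp0 : 0 < p) (hp1 : p < 1) (hσ : 0 ≤ σ)
    (hl : 0 ≤ l) (hproj : IsProjOn (lpBall d p) proj) (hθ : θ ∈ lpBall d p) (ξ : Fin d → ℝ) :
    sqDist (proj (θ + σ • ξ)) θ ≤
      2 * (4 * σ * l) ^ (2 - p) + 16 * σ ^ 2 * ∑ i, max (|ξ i| - l) 0 ^ 2 := by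
  set η := proj (θ + σ • ξ)
  have hmass : ∑ i, |η i - θ i| ^ p ≤ 2 := by
    calc ∑ i, |η i - θ i| ^ p ≤ ∑ i, (|η i| ^ p + |θ i| ^ p) :=
          Finset.sum_le_sum fun i _ => abs_sub_rpow_le_add hp0.le hp1.le _ _
      _ ≤ 1 + 1 := by
          rw [Finset.sum_add_distrib]
          exact add_le_add (sum_abs_rpow_le_one_of_mem_lpBall hp0 (hproj _).1)
            (sum_abs_rpow_le_one_of_mem_lpBall hp0 hθ)
      _ = 2 := by norm_num
  exact sum_sq_le_of_sum_sq_le_inner Finset.univ hp1 hσ hl hmass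
    (hproj.sqDist_le_two_mul_inner hθ σ ξ)

lemma sqDist_proj_lpBall_le_four (hp0 : 0 < p) (hp2 : p ≤ 2)
    (hproj : IsProjOn (lpBall d p) proj) (hθ : θ ∈ lpBall d p) (y : Fin d → ℝ) :
    sqDist (proj y) θ ≤ 4 := by
  have hη := sum_sq_le_one_of_mem_lpBall hp0 hp2 (hproj y).1
  have hθ' := sum_sq_le_one_of_mem_lpBall hp0 hp2 hθ
  have : sqDist (proj y) θ ≤ ∑ i, (2 * proj y i ^ 2 + 2 * θ i ^ 2) :=
    Finset.sum_le_sum fun i _ => by nlinarith [sq_nonneg (proj y i + θ i)]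
  rw [Finset.sum_add_distrib, ← Finset.mul_sum, ← Finset.mul_sum] at this
  linarith

lemma risk_proj_lpBall_le {σ l : ℝ} (hp0 : 0 < p) (hp1 : p < 1) (hσ : 0 ≤ σ)
    (hl : 0 ≤ l) (hproj : IsProjOn (lpBall d p) proj) (hθ : θ ∈ lpBall d p) :
    risk proj σ θ ≤
      ENNReal.ofReal (2 * (4 * σ * l) ^ (2 - p) + 64 * σ ^ 2 * d * exp ((1 - l ^ 2) / 2)) := by
  set C := 2 * (4 * σ * l) ^ (2 - p)
  have hC : 0 ≤ C := by positivity
  calc risk proj σ θ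
      ≤ ∫⁻ ξ, ENNReal.ofReal C +
          ENNReal.ofReal (16 * σ ^ 2) * ∑ i, ENNReal.ofReal (max (|ξ i| - l) 0 ^ 2)
          ∂stdGaussian d := by
        refine lintegral_mono fun ξ => ?_
        rw [← ENNReal.ofReal_sum_of_nonneg fun i _ => by positivity,
          ← ENNReal.ofReal_mul (by positivity), ← ENNReal.ofReal_add hC (by positivity)]
        exact ENNReal.ofReal_le_ofReal (sqDist_proj_lpBall_le hp0 hp1 hσ hl hproj hθ ξ)
    _ = ENNReal.ofReal C + ENNReal.ofReal (16 * σ ^ 2) *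
          ∑ i, ∫⁻ ξ, ENNReal.ofReal (max (|ξ i| - l) 0 ^ 2) ∂stdGaussian d := by
        rw [lintegral_add_left measurable_const, lintegral_const, measure_univ, mul_one,
          lintegral_const_mul _ (by fun_prop), lintegral_finsetSum _ fun i _ => by fun_prop]
    _ ≤ ENNReal.ofReal C + ENNReal.ofReal (16 * σ ^ 2) *
          ∑ _i : Fin d, ENNReal.ofReal (4 * exp ((1 - l ^ 2) / 2)) := by
        gcongr with i
        exact lintegral_sq_posPart_abs_sub_stdGaussian_le hl i
    _ = _ := by
        rw [← ENNReal.ofReal_sum_of_nonneg fun i _ => by positivity,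
          ← ENNReal.ofReal_mul (by positivity), ← ENNReal.ofReal_add hC (by positivity)]
        simp only [Finset.sum_const, Finset.card_univ, Fintype.card_fin, nsmul_eq_mul]
        ring_nf

lemma risk_proj_lpBall_le_four {σ : ℝ} (hp0 : 0 < p) (hp2 : p ≤ 2)
    (hproj : IsProjOn (lpBall d p) proj) (hθ : θ ∈ lpBall d p) :
    risk proj σ θ ≤ ENNReal.ofReal 4 :=
  calc risk proj σ θ ≤ ∫⁻ _, ENNReal.ofReal 4 ∂stdGaussian d :=
        lintegral_mono fun ξ => ENNReal.ofReal_le_ofReal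
          (sqDist_proj_lpBall_le_four hp0 hp2 hproj hθ _)
    _ = ENNReal.ofReal 4 := by rw [lintegral_const, measure_univ, mul_one]

end ProjLpBall

lemma one_le_mul_rpow_of_rpow_neg_inv_le {d p σ : ℝ} (hd : 0 < d) (hp : 0 < p)
    (h : d ^ (-(1 / p)) ≤ σ) : 1 ≤ d * σ ^ p := by
  have := Real.rpow_le_rpow (by positivity) h hp.le
  rw [← Real.rpow_mul hd.le, show -(1 / p) * p = -1 by field_simp, Real.rpow_neg_one] at this
  rw [← inv_mul_cancel₀ hd.ne', mul_comm]
  gcongr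

-- `l = √(2 log(e d σ^p))` balances the two terms of `risk_proj_lpBall_le`.
lemma threshold_bound_le {d p σ : ℝ} (hd : 0 < d) (hp0 : 0 ≤ p) (hp2 : p ≤ 2) (hσ : 0 < σ)
    (hL : 1 ≤ log (exp 1 * d * σ ^ p)) :
    2 * (4 * σ * √(2 * log (exp 1 * d * σ ^ p))) ^ (2 - p) +
        64 * σ ^ 2 * d * exp ((1 - √(2 * log (exp 1 * d * σ ^ p)) ^ 2) / 2) ≤
      540 * (σ ^ 2 * log (exp 1 * d * σ ^ p)) ^ (1 - p / 2) := by
  set L := log (exp 1 * d * σ ^ p)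
  have hX : 0 ≤ (σ ^ 2 * L) ^ (1 - p / 2) := by positivity
  have hfirst : (4 * σ * √(2 * L)) ^ (2 - p) ≤ 32 * (σ ^ 2 * L) ^ (1 - p / 2) := by
    have hsq : (4 * σ * √(2 * L)) ^ 2 = 32 * (σ ^ 2 * L) := by
      rw [mul_pow, Real.sq_sqrt (by linarith)]; ring
    rw [show 2 - p = 2 * (1 - p / 2) by ring, Real.rpow_mul (by positivity), Real.rpow_two,
      hsq, Real.mul_rpow (by norm_num) (by positivity)]
    gcongr
    exact Real.rpow_le_self_of_one_le (by norm_num) (by linarith)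
  have hsecond : σ ^ 2 * d * exp ((1 - √(2 * L) ^ 2) / 2) ≤ (σ ^ 2 * L) ^ (1 - p / 2) := by
    have hexp : exp ((1 - √(2 * L) ^ 2) / 2) ≤ (d * σ ^ p)⁻¹ := by
      rw [Real.sq_sqrt (by linarith), ← mul_inv_cancel_left₀ (exp_pos 1).ne' (d * σ ^ p)⁻¹,
        ← mul_inv, ← mul_assoc, ← exp_log (by positivity : 0 < exp 1 * d * σ ^ p), ← exp_neg,
        ← exp_add]
      gcongr
      linarith
    calc σ ^ 2 * d * exp ((1 - √(2 * L) ^ 2) / 2) ≤ σ ^ 2 * d * (d * σ ^ p)⁻¹ := by gcongr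
      _ = σ ^ (2 - p) := by rw [Real.rpow_sub hσ, Real.rpow_two]; field_simp
      _ = (σ ^ 2) ^ (1 - p / 2) := by rw [← Real.rpow_two, ← Real.rpow_mul hσ.le]; ring_nf
      _ ≤ (σ ^ 2 * L) ^ (1 - p / 2) := by
        gcongr
        · linarith
        · nlinarith [sq_nonneg σ]
  nlinarith

theorem mle_risk_bound_weak_sparse_general (d : ℕ) (hd : 1 ≤ d) (p : ℝ) (hp0 : 0 < p) (hp1 : p < 1)
    (σ : ℝ) (hσ : 0 < σ)
    (proj : (Fin d → ℝ) → Fin d → ℝ) (hproj : IsProjOn (lpBall d p) proj) :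
    (1 / Real.sqrt (1 + Real.log d) ≤ σ →
      supRisk (lpBall d p) proj σ ≤ ENNReal.ofReal 540) ∧
    ((d : ℝ) ^ (-(1 / p)) ≤ σ → σ ≤ 1 / Real.sqrt (1 + Real.log d) →
      supRisk (lpBall d p) proj σ ≤
        ENNReal.ofReal
          (540 * (σ ^ 2 * Real.log (Real.exp 1 * d * σ ^ p)) ^ (1 - p / 2))) ∧
    (σ ≤ (d : ℝ) ^ (-(1 / p)) →
      supRisk (lpBall d p) proj σ ≤ ENNReal.ofReal (540 * (σ ^ 2 * d))) := by
  have hd0 : (0 : ℝ) < d := by exact_mod_cast hd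
  refine ⟨fun _ => iSup₂_le fun θ hθ => ?_, fun hσd _ => iSup₂_le fun θ hθ => ?_,
    fun _ => iSup₂_le fun θ hθ => ?_⟩
  · exact (risk_proj_lpBall_le_four hp0 (by linarith) hproj hθ).trans
      (ENNReal.ofReal_le_ofReal (by norm_num))
  · have hL : 1 ≤ log (exp 1 * d * σ ^ p) := by
      rw [mul_assoc, log_mul (exp_pos 1).ne' (by positivity), log_exp]
      linarith [log_nonneg (one_le_mul_rpow_of_rpow_neg_inv_le hd0 hp0 hσd)]
    exact (risk_proj_lpBall_le hp0 hp1 hσ.le (Real.sqrt_nonneg _) hproj hθ).trans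
      (ENNReal.ofReal_le_ofReal (threshold_bound_le hd0 hp0.le (by linarith) hσ hL))
  · refine (risk_proj_lpBall_le hp0 hp1 hσ.le le_rfl hproj hθ).trans
      (ENNReal.ofReal_le_ofReal ?_)
    have he : exp ((1 - 0 ^ 2) / 2) ≤ 3 :=
      (exp_le_exp.2 (by norm_num)).trans (exp_one_lt_d9.le.trans (by norm_num))
    rw [mul_zero, Real.zero_rpow (by linarith)]
    nlinarith [mul_pos (pow_pos hσ 2) hd0]

/-- Risk bound for the MLE under weak sparsity: for every `p ∈ (0,1)`,
`d ≥ 1` and `σ > 0`, `R^MLE(B_p^d, σ) ≤ 540·r(σ,p,d)`, where `r(σ,p,d)` is `1` in the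
high-noise regime, `(σ² log(e·d·σ^p))^{1−p/2}` in the intermediate regime, and `σ²d` in
the low-noise regime. -/
theorem mle_risk_bound_weak_sparse (d : ℕ) (hd : 1 ≤ d) (p : ℝ) (hp0 : 0 < p) (hp1 : p < 1)
    (σ : ℝ) (hσ : 0 < σ)
    (proj : (Fin d → ℝ) → Fin d → ℝ) (hproj : IsProjOn (lpBall d p) proj)
    (hmeas : Measurable proj) :
    (1 / Real.sqrt (1 + Real.log d) ≤ σ →
      supRisk (lpBall d p) proj σ ≤ ENNReal.ofReal 540) ∧
    ((d : ℝ) ^ (-(1 / p)) ≤ σ → σ ≤ 1 / Real.sqrt (1 + Real.log d) →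
      supRisk (lpBall d p) proj σ ≤
        ENNReal.ofReal
          (540 * (σ ^ 2 * Real.log (Real.exp 1 * d * σ ^ p)) ^ (1 - p / 2))) ∧
    (σ ≤ (d : ℝ) ^ (-(1 / p)) →
      supRisk (lpBall d p) proj σ ≤ ENNReal.ofReal (540 * (σ ^ 2 * d))) :=
  mle_risk_bound_weak_sparse_general d hd p hp0 hp1 σ hσ proj hproj
end
end

section
/- Small-ball estimate for ℓr norms of a Gaussian vector: let D ≥ 44 be an integer and ξ ∼ N(0, I_D). Then for every r ∈ [2, 2·log D], P{ ‖ξ‖_r ≥ (1/√(32e)) · √r · D^{1/r} } ≥ 1/2. -/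
open MeasureTheory ProbabilityTheory Real Filter Pointwise
open scoped ENNReal NNReal

noncomputable section

/-!
Put `t = √r / 2` and count the coordinates with `|ξ i| ≥ t`. They are independent events of
probability `p ≥ 4 √r e^{-r/8} / (√(2π) (r + 4))` (Mills' ratio), and for `D ≥ 44`,
`2 ≤ r ≤ 2 log D` the mean count `D p` is at least `4` and at least `4 n`, where
`n = D (8e)^{-r/2}` is chosen so that `n^{1/r} t = √r D^{1/r} / √(32e)`. Chebyshev's inequality
then puts at least `n` coordinates above `t` with probability `≥ 5/9`, and on that event
`‖ξ‖_r ≥ n^{1/r} t`.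
-/

open Set Topology

lemma integrable_exp_neg_sq_div_two : Integrable fun x : ℝ => exp (-x ^ 2 / 2) := by
  convert integrable_exp_neg_mul_sq (b := 1 / 2) (by norm_num) using 2 with x
  ring_nf

lemma hasDerivAt_div_sq_add_one_mul_exp (x : ℝ) :
    HasDerivAt (fun y : ℝ => y / (y ^ 2 + 1) * exp (-y ^ 2 / 2))
      ((1 - 2 * x ^ 2 - x ^ 4) / (x ^ 2 + 1) ^ 2 * exp (-x ^ 2 / 2)) x := by
  have hquot : HasDerivAt (fun y : ℝ => y / (y ^ 2 + 1))
      ((1 * (x ^ 2 + 1) - x * (2 * x)) / (x ^ 2 + 1) ^ 2) x := by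
    simpa using (hasDerivAt_id x).fun_div ((hasDerivAt_pow 2 x).add_const 1) (by positivity)
  have hexp : HasDerivAt (fun y : ℝ => exp (-y ^ 2 / 2))
      (exp (-x ^ 2 / 2) * (-(2 * x) / 2)) x := by
    simpa using (((hasDerivAt_pow 2 x).neg).div_const 2).exp
  refine (hquot.fun_mul hexp).congr_deriv ?_
  field_simp
  ring

lemma tendsto_div_sq_add_one_mul_exp :
    Tendsto (fun x : ℝ => x / (x ^ 2 + 1) * exp (-x ^ 2 / 2)) atTop (𝓝 0) := by
  have hexp : Tendsto (fun x : ℝ => exp (-x ^ 2 / 2)) atTop (𝓝 0) := by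
    refine tendsto_exp_atBot.comp ?_
    simpa only [neg_div, Function.comp_def] using
      tendsto_neg_atTop_atBot.comp ((tendsto_pow_atTop two_ne_zero).atTop_div_const two_pos)
  refine squeeze_zero_norm (fun x => ?_) hexp
  have hfrac : |x| / (x ^ 2 + 1) ≤ 1 := by
    rw [div_le_one (by positivity)]
    nlinarith [abs_nonneg x, sq_abs x]
  simpa [abs_mul, abs_div, abs_of_pos (by positivity : (0:ℝ) < x ^ 2 + 1)] using
    mul_le_mul_of_nonneg_right hfrac (exp_pos (-x ^ 2 / 2)).le

-- Mills' ratio: the derivative of `-x / (x² + 1) e^{-x²/2}` is at most `e^{-x²/2}`.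
lemma div_sq_add_one_mul_exp_le_integral_Ioi (t : ℝ) :
    t / (t ^ 2 + 1) * exp (-t ^ 2 / 2) ≤ ∫ x in Ioi t, exp (-x ^ 2 / 2) := by
  set F' : ℝ → ℝ := fun x => (1 - 2 * x ^ 2 - x ^ 4) / (x ^ 2 + 1) ^ 2 * exp (-x ^ 2 / 2)
  have hF'_abs : ∀ x, |F' x| ≤ exp (-x ^ 2 / 2) := by
    intro x
    have hfrac : |(1 - 2 * x ^ 2 - x ^ 4) / (x ^ 2 + 1) ^ 2| ≤ 1 := by
      rw [abs_le, le_div_iff₀ (by positivity), div_le_iff₀ (by positivity)]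
      constructor <;> nlinarith [sq_nonneg x, sq_nonneg (x ^ 2)]
    simpa [F', abs_mul] using mul_le_mul_of_nonneg_right hfrac (exp_pos (-x ^ 2 / 2)).le
  have hF'_int : IntegrableOn F' (Ioi t) :=
    integrable_exp_neg_sq_div_two.integrableOn.mono' (by fun_prop) (ae_of_all _ hF'_abs)
  have hFTC := integral_Ioi_of_hasDerivAt_of_tendsto'
    (fun x _ => hasDerivAt_div_sq_add_one_mul_exp x) hF'_int tendsto_div_sq_add_one_mul_exp
  calc t / (t ^ 2 + 1) * exp (-t ^ 2 / 2) = ∫ x in Ioi t, -F' x := by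
        rw [integral_neg, hFTC]; ring
    _ ≤ ∫ x in Ioi t, exp (-x ^ 2 / 2) :=
        integral_mono hF'_int.neg integrable_exp_neg_sq_div_two.integrableOn
          fun x => (neg_le_abs _).trans (hF'_abs x)

lemma gaussianReal_Iic_neg (t : ℝ) : gaussianReal 0 1 (Iic (-t)) = gaussianReal 0 1 (Ici t) := by
  conv_lhs =>
    rw [← neg_zero, ← gaussianReal_map_neg, Measure.map_apply (by fun_prop) measurableSet_Iic]
  congr 1
  ext x
  simp

lemma le_gaussianReal_Ici (t : ℝ) :
    (√(2 * π))⁻¹ * (t / (t ^ 2 + 1) * exp (-t ^ 2 / 2)) ≤ (gaussianReal 0 1).real (Ici t) := by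
  rw [measureReal_def, gaussianReal_apply_eq_integral 0 one_ne_zero,
    ENNReal.toReal_ofReal
      (setIntegral_nonneg measurableSet_Ici fun x _ => gaussianPDFReal_nonneg _ _ x),
    integral_Ici_eq_integral_Ioi]
  simp only [gaussianPDFReal, NNReal.coe_one, mul_one, sub_zero]
  rw [integral_const_mul]
  gcongr
  exact div_sq_add_one_mul_exp_le_integral_Ioi t

lemma le_gaussianReal_abs_ge {t : ℝ} (ht : 0 < t) :
    2 * ((√(2 * π))⁻¹ * (t / (t ^ 2 + 1) * exp (-t ^ 2 / 2)))
      ≤ (gaussianReal 0 1).real {x | t ≤ |x|} := by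
  have hsplit : {x : ℝ | t ≤ |x|} = Iic (-t) ∪ Ici t := by
    ext x
    simp only [mem_ofPred_eq, mem_union, mem_Iic, mem_Ici, le_abs', or_comm]
  rw [hsplit, measureReal_union (Iic_disjoint_Ici.2 (by linarith)) measurableSet_Ici,
    measureReal_def, gaussianReal_Iic_neg, ← measureReal_def, two_mul]
  exact add_le_add (le_gaussianReal_Ici t) (le_gaussianReal_Ici t)

lemma four_mul_sqrt_mul_exp_le_gaussianReal {r : ℝ} (hr : 0 < r) :
    4 * √r * exp (-r / 8)
      ≤ √(2 * π) * (r + 4) * (gaussianReal 0 1).real {x | √r / 2 ≤ |x|} := by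
  have htail := le_gaussianReal_abs_ge (t := √r / 2) (by positivity)
  have ht : (√r / 2) ^ 2 = r / 4 := by rw [div_pow, sq_sqrt hr.le]; ring
  rw [ht] at htail
  calc 4 * √r * exp (-r / 8)
      = √(2 * π) * (r + 4)
          * (2 * ((√(2 * π))⁻¹ * (√r / 2 / (r / 4 + 1) * exp (-(r / 4) / 2)))) := by
        field_simp
        ring_nf
    _ ≤ _ := by gcongr

section CoordinateCount

variable {ι α : Type*} [Fintype ι] [MeasurableSpace α] {ν : Measure α} [IsProbabilityMeasure ν]
  {A : Set α}

lemma memLp_indicator_one (hA : MeasurableSet A) (p : ℝ≥0∞) :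
    MemLp (A.indicator (1 : α → ℝ)) p ν :=
  memLp_indicator_const p hA 1 (Or.inr (measure_ne_top ν A))

lemma variance_indicator_one (hA : MeasurableSet A) :
    Var[A.indicator 1; ν] = ν.real A * (1 - ν.real A) := by
  have hsq : A.indicator (1 : α → ℝ) ^ 2 = A.indicator 1 := by
    ext x
    by_cases hx : x ∈ A <;> simp [hx]
  rw [variance_eq_sub (memLp_indicator_one hA 2), hsq, integral_indicator_one hA]
  ring

lemma integral_sum_indicator_pi (hA : MeasurableSet A) :
    ∫ x, ∑ i, A.indicator 1 (x i) ∂Measure.pi (fun _ : ι => ν) = Fintype.card ι * ν.real A := by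
  rw [integral_finsetSum _ fun i _ =>
    integrable_comp_eval ((memLp_indicator_one hA 1).integrable le_rfl)]
  simp [integral_comp_eval (μ := fun _ : ι => ν) (memLp_indicator_one hA 1).aestronglyMeasurable,
    integral_indicator_one hA]

lemma variance_sum_indicator_pi (hA : MeasurableSet A) :
    Var[fun x => ∑ i, A.indicator 1 (x i); Measure.pi fun _ : ι => ν]
      = Fintype.card ι * ν.real A * (1 - ν.real A) := by
  have := variance_sum_pi (μ := fun _ : ι => ν) (X := fun _ => A.indicator 1)
    fun _ => memLp_indicator_one hA 2
  simp only [variance_indicator_one hA, Finset.sum_const, Finset.card_univ, nsmul_eq_mul] at this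
  rw [mul_assoc, ← this]
  congr 1
  ext x
  simp

-- Chebyshev: the count has variance at most its mean `m ≥ 4`, so it falls below `m / 4` with
-- probability at most `16 / (9 m) ≤ 4 / 9`.
lemma half_le_pi_le_sum_indicator (hA : MeasurableSet A) {n : ℝ}
    (hmean : 4 ≤ Fintype.card ι * ν.real A) (hn : n ≤ Fintype.card ι * ν.real A / 4) :
    ENNReal.ofReal (1 / 2) ≤ Measure.pi (fun _ : ι => ν) {x | n ≤ ∑ i, A.indicator 1 (x i)} := by
  set μ := Measure.pi fun _ : ι => ν
  set S : (ι → α) → ℝ := fun x => ∑ i, A.indicator 1 (x i)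
  set m := Fintype.card ι * ν.real A
  have hS : MemLp S 2 μ := memLp_finsetSum _ fun i _ =>
    (memLp_indicator_one hA 2).comp_measurePreserving (measurePreserving_eval _ i)
  have hSmeas : Measurable S := Finset.measurable_sum _ fun i _ =>
    (measurable_const.indicator hA).comp (measurable_pi_apply i)
  have hdev : 3 / 4 * m ≤ m - n := by linarith
  have hbad : μ.real {x | S x < n} ≤ 4 / 9 := by
    have hcheb := meas_ge_le_variance_div_sq hS (c := m - n) (by linarith)
    rw [variance_sum_indicator_pi hA, integral_sum_indicator_pi hA] at hcheb
    have hsub : {x | S x < n} ⊆ {x | m - n ≤ |S x - m|} := fun x hx => by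
      simp only [mem_ofPred_eq] at hx ⊢
      rw [abs_sub_comm]
      exact le_abs.2 (Or.inl (by linarith))
    have hp : 0 ≤ 1 - ν.real A := sub_nonneg.2 measureReal_le_one
    have hvar : m * (1 - ν.real A) / (m - n) ^ 2 ≤ 4 / 9 := by
      rw [div_le_iff₀ (by nlinarith)]
      nlinarith [mul_self_le_mul_self (by linarith) hdev, measureReal_nonneg (μ := ν) (s := A)]
    calc μ.real {x | S x < n} ≤ μ.real {x | m - n ≤ |S x - m|} := measureReal_mono hsub
      _ ≤ m * (1 - ν.real A) / (m - n) ^ 2 := ENNReal.toReal_le_of_le_ofReal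
          (div_nonneg (mul_nonneg (by linarith) hp) (sq_nonneg _)) hcheb
      _ ≤ 4 / 9 := hvar
  have hgood : {x | n ≤ S x} = {x | S x < n}ᶜ := by
    ext x
    simp [not_lt]
  rw [ENNReal.ofReal_le_iff_le_toReal (measure_ne_top _ _), ← measureReal_def, hgood,
    probReal_compl_eq_one_sub (measurableSet_lt hSmeas measurable_const)]
  linarith

end CoordinateCount

lemma sqrt_two_pi_mul_add_four_le {r X : ℝ} (hr : 2 ≤ r) (hX : 12 + r / 2 ≤ X) :
    √(2 * π) * (r + 4) ≤ √r * X := by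
  have hpi : √(2 * π) ≤ 2.51 := by
    rw [sqrt_le_left (by norm_num)]
    nlinarith [pi_lt_d2]
  set s := √r
  have hs : s ^ 2 = r := sq_sqrt (by linarith)
  have hs0 : 0 ≤ s := sqrt_nonneg r
  calc √(2 * π) * (r + 4) ≤ 2.51 * (r + 4) := by gcongr
    _ ≤ s * (12 + r / 2) := by
        rw [← hs]
        nlinarith [mul_nonneg hs0 (sq_nonneg (s - 2.51))]
    _ ≤ s * X := by gcongr

lemma twelve_add_half_le_mul_exp {D r : ℝ} (hD : 44 ≤ D) (hr : r ≤ 2 * log D) :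
    12 + r / 2 ≤ D * exp (-r / 8) := by
  set u := exp (r / 24)
  have hu : 0 < u := exp_pos _
  have hu_ge : 1 + r / 24 ≤ u := by linarith [add_one_le_exp (r / 24)]
  have hu12 : u ^ 12 ≤ D := by
    rw [← exp_nat_mul, ← exp_log (by linarith : 0 < D)]
    exact exp_le_exp.2 (by linarith)
  have hu4 : 12 * u ^ 4 ≤ D := by
    refine (pow_le_pow_iff_left₀ (by positivity) (by linarith) (by norm_num : 3 ≠ 0)).1 ?_
    calc (12 * u ^ 4) ^ 3 = 1728 * u ^ 12 := by ring
      _ ≤ 1728 * D := by gcongr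
      _ ≤ D ^ 3 := by nlinarith [mul_le_mul hD hD (by norm_num) (by linarith)]
  have hexp : exp (-r / 8) = (u ^ 3)⁻¹ := by
    rw [← exp_nat_mul, ← exp_neg]; ring_nf
  rw [hexp, ← div_eq_mul_inv, le_div_iff₀ (by positivity)]
  calc (12 + r / 2) * u ^ 3 ≤ 12 * u * u ^ 3 := by gcongr; linarith
    _ = 12 * u ^ 4 := by ring
    _ ≤ D := hu4

lemma twelve_add_half_le_four_rpow {r : ℝ} (hr : 2 ≤ r) : 12 + r / 2 ≤ 4 ^ r := by
  have hbern := one_add_mul_self_le_rpow_one_add (s := 3) (by norm_num) (p := r / 2) (by linarith)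
  have hsq : (4 : ℝ) ^ r = ((1 + 3) ^ (r / 2)) ^ 2 := by
    rw [← rpow_natCast, ← rpow_mul (by norm_num)]; norm_num
  rw [hsq]
  nlinarith

lemma four_rpow_le_sqrt_rpow_mul_exp {r : ℝ} (hr : 0 ≤ r) :
    4 ^ r ≤ √(8 * exp 1) ^ r * exp (-r / 8) := by
  have hbase : 4 ≤ √(8 * exp 1) * exp (-1 / 8) := by
    have h2 : 2 ≤ exp (3 / 4) := by
      rw [← exp_log two_pos]; exact exp_le_exp.2 (by linarith [log_two_lt_d9])
    have hsq : (√(8 * exp 1) * exp (-1 / 8)) ^ 2 = 8 * exp (3 / 4) := by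
      rw [mul_pow, sq_sqrt (by positivity), ← exp_nat_mul, mul_assoc, ← exp_add]
      norm_num
    refine (pow_le_pow_iff_left₀ (by norm_num) (by positivity) (by norm_num : 2 ≠ 0)).1 ?_
    rw [hsq]
    linarith
  rw [show -r / 8 = -1 / 8 * r by ring, exp_mul, ← mul_rpow (by positivity) (by positivity)]
  gcongr

lemma four_le_mul_gaussianReal_abs_ge {r Y : ℝ} (hr : 2 ≤ r)
    (hY : 12 + r / 2 ≤ Y * exp (-r / 8)) :
    4 ≤ Y * (gaussianReal 0 1).real {x | √r / 2 ≤ |x|} := by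
  set p := (gaussianReal 0 1).real {x | √r / 2 ≤ |x|}
  have hr0 : 0 < r := by linarith
  have hbound := (four_mul_sqrt_mul_exp_le_gaussianReal hr0).trans
    (mul_le_mul_of_nonneg_right (sqrt_two_pi_mul_add_four_le hr hY) measureReal_nonneg)
  have : √r * exp (-r / 8) * 4 ≤ √r * exp (-r / 8) * (Y * p) := by linarith
  exact le_of_mul_le_mul_left this (by positivity)

lemma rpow_one_div_mul_le_pNorm {d : ℕ} {r t n : ℝ} (hr : 0 < r) (ht : 0 ≤ t) (hn : 0 ≤ n)
    {x : Fin d → ℝ} (hx : n ≤ ∑ i, {y : ℝ | t ≤ |y|}.indicator 1 (x i)) :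
    n ^ (1 / r) * t ≤ pNorm r x := by
  have hsum : n * t ^ r ≤ ∑ i, |x i| ^ r :=
    calc n * t ^ r ≤ (∑ i, {y : ℝ | t ≤ |y|}.indicator 1 (x i)) * t ^ r := by gcongr
      _ = ∑ i, {y : ℝ | t ≤ |y|}.indicator 1 (x i) * t ^ r := Finset.sum_mul _ _ _
      _ ≤ ∑ i, |x i| ^ r := Finset.sum_le_sum fun i _ => by
          by_cases h : t ≤ |x i|
          · simpa [h] using rpow_le_rpow ht h hr.le
          · simp [h]; positivity
  calc n ^ (1 / r) * t = (n * t ^ r) ^ (1 / r) := by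
        rw [mul_rpow hn (by positivity), one_div, rpow_rpow_inv ht hr.ne']
    _ ≤ pNorm r x := rpow_le_rpow (by positivity) hsum (by positivity)

/-- Small-ball estimate for ℓr norms of a standard Gaussian vector:
if `D ≥ 44` and `r ∈ [2, 2·log D]`, then
`P{‖ξ‖_r ≥ (1/√(32e))·√r·D^{1/r}} ≥ 1/2`. -/
theorem gaussian_lr_norm_small_ball (D : ℕ) (hD : 44 ≤ D)
    (r : ℝ) (hr1 : 2 ≤ r) (hr2 : r ≤ 2 * Real.log D) :
    ENNReal.ofReal (1 / 2) ≤
      stdGaussian D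
        {ξ | 1 / Real.sqrt (32 * Real.exp 1) * Real.sqrt r * (D : ℝ) ^ (1 / r)
              ≤ pNorm r ξ} := by
  have hr : 0 < r := by linarith
  have hD' : (44 : ℝ) ≤ D := by exact_mod_cast hD
  set A := {x : ℝ | √r / 2 ≤ |x|}
  set p := (gaussianReal 0 1).real A
  set n := (D : ℝ) / √(8 * exp 1) ^ r
  have hmean : 4 ≤ D * p :=
    four_le_mul_gaussianReal_abs_ge hr1 (twelve_add_half_le_mul_exp hD' hr2)
  have hn : n ≤ D * p / 4 := by
    have := four_le_mul_gaussianReal_abs_ge hr1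
      ((twelve_add_half_le_four_rpow hr1).trans (four_rpow_le_sqrt_rpow_mul_exp hr.le))
    rw [div_le_div_iff₀ (by positivity) (by norm_num)]
    nlinarith
  have hcount := half_le_pi_le_sum_indicator (ι := Fin D) (ν := gaussianReal 0 1)
    (measurableSet_le measurable_const (by fun_prop) : MeasurableSet A)
    (by simpa using hmean) (by simpa using hn)
  refine hcount.trans (measure_mono fun ξ hξ => ?_)
  have hthreshold : n ^ (1 / r) * (√r / 2) = 1 / √(32 * exp 1) * √r * D ^ (1 / r) := by
    rw [div_rpow (by positivity) (by positivity), one_div r, rpow_rpow_inv (by positivity) hr.ne',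
      show (32 : ℝ) * exp 1 = 2 ^ 2 * (8 * exp 1) by ring,
      sqrt_mul (by norm_num : (0 : ℝ) ≤ 2 ^ 2), sqrt_sq (by norm_num : (0 : ℝ) ≤ 2)]
    field_simp
  rw [mem_ofPred_eq, ← hthreshold]
  exact rpow_one_div_mul_le_pNorm hr (by positivity) (by positivity) hξ
end
end

section
/- Risk monotonicity of projections onto convex sets under increased noise: fix 0 < σ ≤ ν and let Θ ⊆ ℝ^d be nonempty, closed and convex. Then for every θ* ∈ Θ and every ξ ∈ ℝ^d (deterministically), ‖Π_Θ(θ* + σξ) − θ*‖₂ ≤ ‖Π_Θ(θ* + νξ) − θ*‖₂. Consequently, for Gaussian ξ ∼ N(0, I_d), E‖Π_Θ(θ* + σξ) − θ*‖₂² ≤ E‖Π_Θ(θ* + νξ) − θ*‖₂² for every θ* ∈ Θ, and hence R^MLE(Θ, σ) ≤ R^MLE(Θ, ν). -/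
open MeasureTheory ProbabilityTheory Real Filter Pointwise
open scoped ENNReal NNReal

noncomputable section

/-! Write `y_t = θ + t ξ`, `p = Π(y_σ) − θ` and `q = Π(y_ν) − θ`. The variational inequalities
characterising the two projections, weighted by `ν` and `σ` and added, cancel the noise term and
leave `ν ‖p‖² + σ ‖q‖² ≤ (σ + ν) ⟪p, q⟫ ≤ (σ + ν) ‖p‖ ‖q‖`, i.e.
`(‖p‖ − ‖q‖) (ν ‖p‖ − σ ‖q‖) ≤ 0`; for `0 < σ ≤ ν` this forces `‖p‖ ≤ ‖q‖`. The bounds on the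
risks follow by monotonicity of the integral and of the supremum. -/

section InnerProductSpace

variable {F : Type*} [NormedAddCommGroup F] [InnerProductSpace ℝ F]

theorem real_inner_sub_le_zero_of_isMinOn {K : Set F} (hK : Convex ℝ K) {u v : F} (hv : v ∈ K)
    (hmin : IsMinOn (fun w => ‖u - w‖) K v) : ∀ w ∈ K, inner ℝ (u - v) (w - v) ≤ 0 := by
  have : Nonempty K := ⟨⟨v, hv⟩⟩
  refine (norm_eq_iInf_iff_real_inner_le_zero hK hv).1 (le_antisymm ?_ ?_)
  · exact le_ciInf fun w => hmin w.2
  · exact ciInf_le (f := fun w : K => ‖u - w‖) ⟨0, by rintro _ ⟨w, rfl⟩; positivity⟩ ⟨v, hv⟩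

theorem norm_sub_le_norm_sub_of_isMinOn {K : Set F} (hK : Convex ℝ K) {θ ξ a b : F} {σ ν : ℝ}
    (hσ : 0 < σ) (hσν : σ ≤ ν) (ha : a ∈ K) (hb : b ∈ K)
    (ha_min : IsMinOn (fun w => ‖θ + σ • ξ - w‖) K a)
    (hb_min : IsMinOn (fun w => ‖θ + ν • ξ - w‖) K b) : ‖a - θ‖ ≤ ‖b - θ‖ := by
  have hν : 0 < ν := hσ.trans_le hσν
  have hva := real_inner_sub_le_zero_of_isMinOn hK ha ha_min b hb
  have hvb := real_inner_sub_le_zero_of_isMinOn hK hb hb_min a ha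
  rw [show θ + σ • ξ - a = σ • ξ - (a - θ) by abel, show b - a = (b - θ) - (a - θ) by abel] at hva
  rw [show θ + ν • ξ - b = ν • ξ - (b - θ) by abel, show a - b = (a - θ) - (b - θ) by abel] at hvb
  set p := a - θ
  set q := b - θ
  simp only [inner_sub_left, inner_sub_right, real_inner_smul_left, real_inner_self_eq_norm_sq,
    real_inner_comm p q] at hva hvb
  have hmix : ν * ‖p‖ ^ 2 + σ * ‖q‖ ^ 2 ≤ (σ + ν) * inner ℝ p q := by
    linear_combination ν * hva + σ * hvb
  have hprod : (‖p‖ - ‖q‖) * (ν * ‖p‖ - σ * ‖q‖) ≤ 0 := by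
    nlinarith [mul_le_mul_of_nonneg_left (real_inner_le_norm p q) (by positivity : 0 ≤ σ + ν)]
  by_contra! hlt
  have hgap := sub_pos.2 hlt
  nlinarith [mul_pos hgap (mul_pos hν hgap),
    mul_nonneg hgap.le (mul_nonneg (sub_nonneg.2 hσν) (norm_nonneg q))]

end InnerProductSpace

theorem sqDist_eq_norm_sq {d : ℕ} (x y : Fin d → ℝ) :
    sqDist x y = ‖WithLp.toLp 2 x - WithLp.toLp 2 y‖ ^ 2 := by
  rw [← WithLp.toLp_sub, EuclideanSpace.norm_sq_eq]
  simp [sqDist]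

theorem IsProjOn.isMinOn {d : ℕ} {Θ : Set (Fin d → ℝ)} {proj : (Fin d → ℝ) → Fin d → ℝ}
    (hproj : IsProjOn Θ proj) (y : Fin d → ℝ) :
    IsMinOn (fun w => ‖WithLp.toLp 2 y - w‖) (WithLp.ofLp ⁻¹' Θ) (WithLp.toLp 2 (proj y)) := by
  intro w hw
  have hle := (hproj y).2 _ hw
  rw [sqDist_eq_norm_sq, sqDist_eq_norm_sq, WithLp.toLp_ofLp] at hle
  exact (pow_le_pow_iff_left₀ (norm_nonneg _) (norm_nonneg _) two_ne_zero).1 hle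

theorem IsProjOn.sqDist_le_of_le {d : ℕ} {Θ : Set (Fin d → ℝ)} {proj : (Fin d → ℝ) → Fin d → ℝ}
    (hproj : IsProjOn Θ proj) (hconv : Convex ℝ Θ) {σ ν : ℝ} (hσ : 0 < σ) (hσν : σ ≤ ν)
    (θ ξ : Fin d → ℝ) : sqDist (proj (θ + σ • ξ)) θ ≤ sqDist (proj (θ + ν • ξ)) θ := by
  have hK : Convex ℝ (WithLp.ofLp ⁻¹' Θ : Set (EuclideanSpace ℝ (Fin d))) :=
    hconv.linear_preimage (WithLp.linearEquiv 2 ℝ (Fin d → ℝ)).toLinearMap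
  have hmin (t : ℝ) := hproj.isMinOn (θ + t • ξ)
  simp only [WithLp.toLp_add, WithLp.toLp_smul] at hmin
  rw [sqDist_eq_norm_sq, sqDist_eq_norm_sq]
  gcongr
  exact norm_sub_le_norm_sub_of_isMinOn hK hσ hσν (hproj _).1 (hproj _).1 (hmin σ) (hmin ν)

theorem risk_monotonicity_general (d : ℕ) (σ ν : ℝ) (hσ : 0 < σ) (hσν : σ ≤ ν)
    (Θ : Set (Fin d → ℝ)) (hconv : Convex ℝ Θ)
    (proj : (Fin d → ℝ) → Fin d → ℝ) (hproj : IsProjOn Θ proj) :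
    (∀ θ ∈ Θ, ∀ ξ : Fin d → ℝ,
      sqDist (proj (θ + σ • ξ)) θ ≤ sqDist (proj (θ + ν • ξ)) θ) ∧
    (∀ θ ∈ Θ, risk proj σ θ ≤ risk proj ν θ) ∧
    supRisk Θ proj σ ≤ supRisk Θ proj ν := by
  have hpointwise θ ξ := hproj.sqDist_le_of_le hconv hσ hσν θ ξ
  have hrisk θ : risk proj σ θ ≤ risk proj ν θ :=
    lintegral_mono fun ξ => ENNReal.ofReal_le_ofReal (hpointwise θ ξ)
  exact ⟨fun θ _ => hpointwise θ, fun θ _ => hrisk θ, iSup₂_mono fun θ _ => hrisk θ⟩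

/-- Risk monotonicity of projections onto convex sets under increased
noise: for `0 < σ ≤ ν`, a nonempty closed convex `Θ`, `θ* ∈ Θ`, one has (i) the
deterministic pointwise bound `‖Π_Θ(θ* + σξ) − θ*‖₂² ≤ ‖Π_Θ(θ* + νξ) − θ*‖₂²`;
(ii) the corresponding bound in expectation over `ξ ∼ N(0, I_d)`; and (iii)
`R^MLE(Θ, σ) ≤ R^MLE(Θ, ν)`. -/
theorem risk_monotonicity (d : ℕ) (σ ν : ℝ) (hσ : 0 < σ) (hσν : σ ≤ ν)
    (Θ : Set (Fin d → ℝ)) (hne : Θ.Nonempty) (hcl : IsClosed Θ) (hconv : Convex ℝ Θ)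
    (proj : (Fin d → ℝ) → Fin d → ℝ) (hproj : IsProjOn Θ proj) (hmeas : Measurable proj) :
    (∀ θ ∈ Θ, ∀ ξ : Fin d → ℝ,
      sqDist (proj (θ + σ • ξ)) θ ≤ sqDist (proj (θ + ν • ξ)) θ) ∧
    (∀ θ ∈ Θ, risk proj σ θ ≤ risk proj ν θ) ∧
    supRisk Θ proj σ ≤ supRisk Θ proj ν :=
  risk_monotonicity_general d σ ν hσ hσν Θ hconv proj hproj
end
end

section
/- Maximal inequality for sparse restrictions of a Gaussian vector: for all integers 1 ≤ k ≤ d and ξ ∼ N(0, I_d), E[ max_{S ⊆ {1,…,d}, |S| ≤ k} Σ_{i ∈ S} ξ_i² ] ≤ 6·k·log(e·d/k). -/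
open MeasureTheory ProbabilityTheory Real Filter Pointwise
open scoped ENNReal NNReal

noncomputable section

/-! Put `M = max_{|S| ≤ k} ∑_{i ∈ S} ξᵢ²`. Jensen's inequality gives `exp (𝔼 M / 4) ≤ 𝔼 exp (M / 4)`,
and `exp (M / 4)` is at most the sum over all admissible `S` of `∏_{i ∈ S} exp (ξᵢ² / 4)`, whose
expectation is `√2 ^ |S| ≤ e ^ (k / 2)` by independence of the coordinates. There are at most
`∑_{j ≤ k} C(d, j) ≤ (e d / k) ^ k` admissible sets, so `𝔼 M ≤ 4 k log (e d / k) + 2 k`, and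
`log (e d / k) ≥ 1` absorbs the last term. -/

section MaximalInequality

/- In `ℝ`, `⨆ i ∈ s, x i` is `⨆ i, ⨆ (_ : i ∈ s), x i`, and the inner supremum is the junk value `0`
when `i ∉ s`; for nonnegative `x` the whole expression is the maximum of `x` over `s`. -/

variable {Ω ι : Type*} {s : Set ι} {t : ℝ}

lemma exp_mul_biSup_le_sum_exp (hs : s.Finite) (hne : s.Nonempty) (ht : 0 < t) {x : ι → ℝ}
    (hx : ∀ i ∈ s, 0 ≤ x i) : exp (t * ⨆ i ∈ s, x i) ≤ ∑ i ∈ hs.toFinset, exp (t * x i) := by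
  obtain ⟨i₀, hi₀⟩ := hne
  have hterm (i : ι) (hi : i ∈ s) : exp (t * x i) ≤ ∑ i ∈ hs.toFinset, exp (t * x i) :=
    Finset.single_le_sum (f := fun j ↦ exp (t * x j)) (fun _ _ ↦ (exp_pos _).le)
      (hs.mem_toFinset.2 hi)
  have hpos : 0 < ∑ i ∈ hs.toFinset, exp (t * x i) := (exp_pos _).trans_le (hterm i₀ hi₀)
  have hle (i : ι) (hi : i ∈ s) : t * x i ≤ log (∑ i ∈ hs.toFinset, exp (t * x i)) :=
    (le_log_iff_exp_le hpos).2 (hterm i hi)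
  have hlog : 0 ≤ log (∑ i ∈ hs.toFinset, exp (t * x i)) :=
    (mul_nonneg ht.le (hx i₀ hi₀)).trans (hle i₀ hi₀)
  have hsup : t * ⨆ i ∈ s, x i ≤ log (∑ i ∈ hs.toFinset, exp (t * x i)) := by
    rw [← le_div_iff₀' ht]
    exact Real.iSup_le (fun i ↦ Real.iSup_le (fun hi ↦ (le_div_iff₀' ht).2 (hle i hi))
      (div_nonneg hlog ht.le)) (div_nonneg hlog ht.le)
  calc exp (t * ⨆ i ∈ s, x i) ≤ exp (log (∑ i ∈ hs.toFinset, exp (t * x i))) := exp_le_exp.2 hsup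
    _ = _ := exp_log hpos

variable [MeasurableSpace Ω] {μ : Measure Ω} [IsProbabilityMeasure μ] {X : ι → Ω → ℝ}

theorem mul_integral_biSup_le_log_ncard_mul (hs : s.Finite) (hne : s.Nonempty) (ht : 0 < t)
    (hX0 : ∀ i ∈ s, ∀ ω, 0 ≤ X i ω) (hXm : ∀ i ∈ s, Measurable (X i))
    (hint : ∀ i ∈ s, Integrable (fun ω ↦ exp (t * X i ω)) μ) {B : ℝ}
    (hB : ∀ i ∈ s, ∫ ω, exp (t * X i ω) ∂μ ≤ B) :
    t * ∫ ω, ⨆ i ∈ s, X i ω ∂μ ≤ log (s.ncard * B) := by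
  set M : Ω → ℝ := fun ω ↦ ⨆ i ∈ s, X i ω
  have hMm : Measurable M := Measurable.biSup s hs.countable hXm
  have hM0 (ω : Ω) : 0 ≤ M ω := Real.iSup_nonneg fun i ↦ Real.iSup_nonneg fun hi ↦ hX0 i hi ω
  have hsum_int : Integrable (fun ω ↦ ∑ i ∈ hs.toFinset, exp (t * X i ω)) μ :=
    integrable_finsetSum _ fun i hi ↦ hint i (hs.mem_toFinset.1 hi)
  have hdom (ω : Ω) : exp (t * M ω) ≤ ∑ i ∈ hs.toFinset, exp (t * X i ω) :=
    exp_mul_biSup_le_sum_exp hs hne ht fun i hi ↦ hX0 i hi ω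
  have hexp_int : Integrable (fun ω ↦ exp (t * M ω)) μ :=
    hsum_int.mono' (by fun_prop) (ae_of_all _ fun ω ↦ by
      simpa only [norm_of_nonneg (exp_pos _).le] using hdom ω)
  have hM_int : Integrable M μ :=
    (hexp_int.div_const t).mono' hMm.aestronglyMeasurable (ae_of_all _ fun ω ↦ by
      rw [norm_of_nonneg (hM0 ω), le_div_iff₀' ht]
      linarith [add_one_le_exp (t * M ω)])
  have hjensen : exp (∫ ω, t * M ω ∂μ) ≤ ∫ ω, exp (t * M ω) ∂μ :=
    convexOn_exp.map_integral_le continuous_exp.continuousOn isClosed_univ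
      (ae_of_all _ fun _ ↦ Set.mem_univ _) (hM_int.const_mul t) hexp_int
  have hsum_le : ∫ ω, ∑ i ∈ hs.toFinset, exp (t * X i ω) ∂μ ≤ s.ncard * B := by
    rw [integral_finsetSum _ fun i hi ↦ hint i (hs.mem_toFinset.1 hi),
      Set.ncard_eq_toFinset_card s hs, ← nsmul_eq_mul]
    exact Finset.sum_le_card_nsmul _ _ _ fun i hi ↦ hB i (hs.mem_toFinset.1 hi)
  have hexp_le : exp (t * ∫ ω, M ω ∂μ) ≤ s.ncard * B := by
    rw [← integral_const_mul]
    exact hjensen.trans ((integral_mono hexp_int hsum_int hdom).trans hsum_le)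
  simpa only [log_exp] using log_le_log (exp_pos _) hexp_le

end MaximalInequality

lemma ncard_setOf_card_le_le_sum_choose (α : Type*) [Fintype α] (k : ℕ) :
    {S : Finset α | S.card ≤ k}.ncard ≤ ∑ j ∈ Finset.range (k + 1), (Fintype.card α).choose j := by
  classical
  have hS : {S : Finset α | S.card ≤ k} =
      ↑((Finset.range (k + 1)).biUnion fun j ↦ Finset.powersetCard j (Finset.univ : Finset α)) := by
    ext S
    simp
  rw [hS, Set.ncard_coe_finset]
  refine Finset.card_biUnion_le.trans_eq ?_
  simp [Finset.card_powersetCard]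

lemma sum_range_choose_mul_pow_le {x : ℝ} (hx0 : 0 ≤ x) (hx1 : x ≤ 1) {n k : ℕ} (hkn : k ≤ n) :
    (∑ j ∈ Finset.range (k + 1), (n.choose j : ℝ)) * x ^ k ≤ (1 + x) ^ n := by
  calc (∑ j ∈ Finset.range (k + 1), (n.choose j : ℝ)) * x ^ k
      ≤ ∑ j ∈ Finset.range (k + 1), x ^ j * (n.choose j : ℝ) := by
        rw [Finset.sum_mul]
        refine Finset.sum_le_sum fun j hj ↦ ?_
        rw [mul_comm]
        exact mul_le_mul_of_nonneg_right
          (pow_le_pow_of_le_one hx0 hx1 (Finset.mem_range_succ_iff.1 hj)) (Nat.cast_nonneg _)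
    _ ≤ ∑ j ∈ Finset.range (n + 1), x ^ j * (n.choose j : ℝ) :=
        Finset.sum_le_sum_of_subset_of_nonneg (Finset.range_subset_range.2 (by omega))
          fun _ _ _ ↦ by positivity
    _ = (1 + x) ^ n := by
        rw [add_comm (1 : ℝ), add_pow]
        simp

lemma sum_range_choose_le_exp_mul_div_pow {n k : ℕ} (hk : 0 < k) (hkn : k ≤ n) :
    (∑ j ∈ Finset.range (k + 1), (n.choose j : ℝ)) ≤ (exp 1 * n / k) ^ k := by
  have hk' : (0 : ℝ) < k := by exact_mod_cast hk
  have hn : (0 : ℝ) < n := by exact_mod_cast hk.trans_le hkn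
  have hkn' : (k : ℝ) ≤ n := by exact_mod_cast hkn
  set x : ℝ := k / n
  have hxk : 0 < x ^ k := by positivity
  -- `x = k / n` balances `(1 + x) ^ n ≤ exp (x n) = exp k` against the factor `x ^ k`
  have key : (∑ j ∈ Finset.range (k + 1), (n.choose j : ℝ)) * x ^ k ≤ exp k :=
    calc _ ≤ (1 + x) ^ n :=
          sum_range_choose_mul_pow_le (by positivity) (div_le_one_of_le₀ hkn' hn.le) hkn
      _ ≤ exp x ^ n := by gcongr; linarith [add_one_le_exp x]
      _ = exp k := by rw [← exp_nat_mul]; congr 1; simp only [x]; field_simp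
  calc _ ≤ exp k / x ^ k := (le_div_iff₀ hxk).2 key
    _ = (exp 1 * n / k) ^ k := by
        rw [div_pow, div_pow, mul_pow, ← exp_nat_mul, mul_one]
        field_simp

lemma ncard_setOf_card_le_le_exp_mul_div_pow (α : Type*) [Fintype α] {k : ℕ} (hk : 0 < k)
    (hkα : k ≤ Fintype.card α) :
    ({S : Finset α | S.card ≤ k}.ncard : ℝ) ≤ (exp 1 * Fintype.card α / k) ^ k :=
  calc _ ≤ ((∑ j ∈ Finset.range (k + 1), (Fintype.card α).choose j : ℕ) : ℝ) := by
        exact_mod_cast ncard_setOf_card_le_le_sum_choose α k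
    _ ≤ _ := by
        push_cast
        exact sum_range_choose_le_exp_mul_div_pow hk hkα

lemma gaussianPDFReal_zero_one_mul_exp_mul_sq (t x : ℝ) :
    gaussianPDFReal 0 1 x * exp (t * x ^ 2) = (√(2 * π))⁻¹ * exp (-(1 / 2 - t) * x ^ 2) := by
  rw [gaussianPDFReal, mul_assoc, ← exp_add]
  ring_nf
  simp

lemma integrable_exp_mul_sq_gaussianReal {t : ℝ} (ht : t < 1 / 2) :
    Integrable (fun x ↦ exp (t * x ^ 2)) (gaussianReal 0 1) := by
  rw [gaussianReal_of_var_ne_zero 0 one_ne_zero,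
    integrable_withDensity_iff_integrable_smul' (measurable_gaussianPDF 0 1)
      (ae_of_all _ fun _ ↦ gaussianPDF_lt_top)]
  simp only [toReal_gaussianPDF, smul_eq_mul, gaussianPDFReal_zero_one_mul_exp_mul_sq]
  exact (integrable_exp_neg_mul_sq (by linarith)).const_mul _

lemma integral_exp_mul_sq_gaussianReal {t : ℝ} (ht : t < 1 / 2) :
    ∫ x, exp (t * x ^ 2) ∂gaussianReal 0 1 = (√(1 - 2 * t))⁻¹ := by
  rw [integral_gaussianReal_eq_integral_smul one_ne_zero]
  simp only [smul_eq_mul, gaussianPDFReal_zero_one_mul_exp_mul_sq]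
  rw [integral_const_mul, integral_gaussian, ← sqrt_inv, ← sqrt_mul (by positivity), ← sqrt_inv]
  congr 1
  have : (0 : ℝ) < 1 - 2 * t := by linarith
  field_simp

lemma Finset.prod_comp_eq_prod_ite {ι E M : Type*} [Fintype ι] [DecidableEq ι] [CommMonoid M]
    (S : Finset ι) (f : E → M) (x : ι → E) :
    ∏ i ∈ S, f (x i) = ∏ i, (if i ∈ S then f else 1) (x i) := by
  rw [← Finset.prod_ite_mem_eq]
  refine Finset.prod_congr rfl fun i _ ↦ ?_
  split_ifs <;> rfl

section FinsetProd

variable {ι E : Type*} [Fintype ι] [MeasurableSpace E] {μ : Measure E} [IsProbabilityMeasure μ]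

lemma integrable_prod_finset_pi {f : E → ℝ} (hf : Integrable f μ) (S : Finset ι) :
    Integrable (fun x : ι → E ↦ ∏ i ∈ S, f (x i)) (Measure.pi fun _ ↦ μ) := by
  classical
  simp only [Finset.prod_comp_eq_prod_ite S f]
  refine Integrable.fintype_prod fun i ↦ ?_
  split_ifs
  exacts [hf, integrable_const 1]

lemma integral_prod_finset_pi (f : E → ℝ) (S : Finset ι) :
    ∫ x : ι → E, ∏ i ∈ S, f (x i) ∂(Measure.pi fun _ ↦ μ) = (∫ x, f x ∂μ) ^ S.card := by
  classical
  simp only [Finset.prod_comp_eq_prod_ite S f]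
  rw [integral_fintype_prod_eq_prod]
  simp [apply_ite (fun g : E → ℝ ↦ ∫ x, g x ∂μ), Finset.prod_ite_mem]

end FinsetProd

lemma exp_mul_sum_sq_eq_prod (t : ℝ) {d : ℕ} (S : Finset (Fin d)) (ξ : Fin d → ℝ) :
    exp (t * ∑ i ∈ S, ξ i ^ 2) = ∏ i ∈ S, exp (t * ξ i ^ 2) := by
  rw [Finset.mul_sum, exp_sum]

lemma integrable_exp_mul_sum_sq_stdGaussian {t : ℝ} (ht : t < 1 / 2) {d : ℕ} (S : Finset (Fin d)) :
    Integrable (fun ξ ↦ exp (t * ∑ i ∈ S, ξ i ^ 2)) (stdGaussian d) := by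
  simp only [exp_mul_sum_sq_eq_prod]
  exact integrable_prod_finset_pi (integrable_exp_mul_sq_gaussianReal ht) S

lemma integral_exp_mul_sum_sq_stdGaussian {t : ℝ} (ht : t < 1 / 2) {d : ℕ} (S : Finset (Fin d)) :
    ∫ ξ, exp (t * ∑ i ∈ S, ξ i ^ 2) ∂stdGaussian d = (√(1 - 2 * t))⁻¹ ^ S.card := by
  simp only [exp_mul_sum_sq_eq_prod]
  rw [_root_.stdGaussian, integral_prod_finset_pi (fun x ↦ exp (t * x ^ 2)),
    integral_exp_mul_sq_gaussianReal ht]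

lemma integral_exp_quarter_mul_sum_sq_stdGaussian_le {d k : ℕ} {S : Finset (Fin d)}
    (hS : S.card ≤ k) : ∫ ξ, exp (1 / 4 * ∑ i ∈ S, ξ i ^ 2) ∂stdGaussian d ≤ exp (k / 2) := by
  have hsqrt : (√(1 - 2 * (1 / 4) : ℝ))⁻¹ ≤ exp (1 / 2) := by
    rw [← sqrt_inv, exp_half]
    refine sqrt_le_sqrt ?_
    calc (1 - 2 * (1 / 4) : ℝ)⁻¹ = 2 := by norm_num
      _ ≤ exp 1 := by linarith [add_one_le_exp (1 : ℝ)]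
  calc _ = (√(1 - 2 * (1 / 4) : ℝ))⁻¹ ^ S.card := integral_exp_mul_sum_sq_stdGaussian (by norm_num) S
    _ ≤ exp (1 / 2) ^ k := by
        refine (pow_le_pow_left₀ (by positivity) hsqrt _).trans (pow_le_pow_right₀ ?_ hS)
        exact one_le_exp (by norm_num)
    _ = exp (k / 2) := by rw [← exp_nat_mul]; ring_nf

/-- Maximal inequality for sparse restrictions of a Gaussian vector:
for `1 ≤ k ≤ d` and `ξ ∼ N(0, I_d)`,
`E[max_{S ⊆ [d], |S| ≤ k} Σ_{i ∈ S} ξᵢ²] ≤ 6·k·log(e·d/k)`. -/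
theorem gaussian_sparse_maximal_inequality (d k : ℕ) (hk1 : 1 ≤ k) (hkd : k ≤ d) :
    ∫ ξ, (⨆ S ∈ {S : Finset (Fin d) | S.card ≤ k}, ∑ i ∈ S, ξ i ^ 2) ∂(stdGaussian d)
      ≤ 6 * k * Real.log (Real.exp 1 * d / k) := by
  have hk : (0 : ℝ) < k := by exact_mod_cast hk1
  have hkd' : (k : ℝ) ≤ d := by exact_mod_cast hkd
  have hd : (0 : ℝ) < d := hk.trans_le hkd'
  set s := {S : Finset (Fin d) | S.card ≤ k}
  have hne : s.Nonempty := ⟨∅, by simp [s]⟩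
  have hmax := mul_integral_biSup_le_log_ncard_mul (μ := stdGaussian d) s.toFinite hne
    (by norm_num : (0 : ℝ) < 1 / 4) (X := fun S ξ ↦ ∑ i ∈ S, ξ i ^ 2)
    (fun _ _ _ ↦ by positivity) (fun _ _ ↦ by fun_prop)
    (fun S _ ↦ integrable_exp_mul_sum_sq_stdGaussian (by norm_num) S)
    (fun _ hS ↦ integral_exp_quarter_mul_sum_sq_stdGaussian_le hS)
  have hN : (0 : ℝ) < s.ncard := by exact_mod_cast (Set.ncard_pos s.toFinite).2 hne
  have hlog : log (s.ncard * exp (k / 2)) ≤ k * log (exp 1 * d / k) + k / 2 := by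
    rw [log_mul hN.ne' (exp_pos _).ne', log_exp, ← log_pow]
    gcongr
    simpa using ncard_setOf_card_le_le_exp_mul_div_pow (Fin d) hk1 (by simpa using hkd)
  have hlog_ge_one : 1 ≤ log (exp 1 * d / k) := by
    rw [le_log_iff_exp_le (by positivity), mul_div_assoc]
    exact le_mul_of_one_le_right (exp_pos 1).le ((one_le_div hk).2 hkd')
  linarith [mul_le_mul_of_nonneg_left hlog_ge_one hk.le]
end
end
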